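/- arXiv:1805.00818 — 8 statements merged into one kernel-verified Lean document; each statement's English description precedes it below -/
import Mathlib

section
/- Orthonormality of the even generalized q-Hermite polynomials induced by little q-Laguerre orthonormality. Let 0 < q < 1, α > −1, κ ≥ 0. Define the little q-Laguerre weight v(x) = x^α·∏_{l=0}^∞ (1 − q^{2(l+1)}κ²·x) for x > 0, and the generalized q-Hermite weight ω(x) = |x|^{2α+1}·∏_{l=0}^∞ (1 − q^{2(l+1)}κ²·x²) for x ∈ ℝ. Let (p_n)_{n≥0} be real functions on (0,1] such that for all m, n the series Σ_{k=0}^∞ p_m(q^{2k})·p_n(q^{2k})·v(q^{2k})·q^{2k} converges absolutely and (1 − q²)·Σ_{k=0}^∞ p_m(q^{2k})·p_n(q^{2k})·v(q^{2k})·q^{2k} = δ_{mn}. Define P_{2n}(x) = √((1+q)/2)·p_n(x²). Then for all m, n: (1 − q)·Σ_{k=0}^∞ [P_{2m}(q^k)·P_{2n}(q^k)·ω(q^k) + P_{2m}(−q^k)·P_{2n}(−q^k)·ω(−q^k)]·q^k = δ_{mn}, i.e. the Jackson q-integral over [−1,1] of P_{2m}·P_{2n}·ω equals δ_{mn}. 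-/
/-!
For `x ≠ 0` the weights satisfy `ω x = |x| · v (x²)`, so the integrand of the Jackson q-integral
over `[-1, 1]` takes the same value at `q^k` and `-q^k`, and the substitution `y = x²` turns that
integral of `|x| · f (x²)` into `2 / (1 + q)` times the Jackson q²-integral of `f` over `[0, 1]`.
The normalization `√((1 + q) / 2)` of `P (2n)` exactly compensates this factor.
-/

open Real

noncomputable section

/-- The Jackson q-integral over `[0, 1]`. -/
def jacksonIntegral (q : ℝ) (f : ℝ → ℝ) : ℝ :=
  (1 - q) * ∑' k : ℕ, f (q ^ k) * q ^ k

/-- The Jackson q-integral over `[-1, 1]`. -/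
def symmJacksonIntegral (q : ℝ) (f : ℝ → ℝ) : ℝ :=
  (1 - q) * ∑' k : ℕ, (f (q ^ k) + f (-q ^ k)) * q ^ k

end

theorem jacksonIntegral_const_mul (q c : ℝ) (f : ℝ → ℝ) :
    jacksonIntegral q (fun x => c * f x) = c * jacksonIntegral q f := by
  simp only [jacksonIntegral, mul_assoc, tsum_mul_left]
  ring

theorem symmJacksonIntegral_congr {q : ℝ} (hq : q ≠ 0) {f g : ℝ → ℝ}
    (h : ∀ x ≠ 0, f x = g x) : symmJacksonIntegral q f = symmJacksonIntegral q g := by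
  have hqk (k : ℕ) : q ^ k ≠ 0 := pow_ne_zero k hq
  simp only [symmJacksonIntegral, h _ (hqk _), h _ (neg_ne_zero.2 (hqk _))]

theorem symmJacksonIntegral_abs_mul_comp_sq {q : ℝ} (hq : 0 ≤ q) (f : ℝ → ℝ) :
    (1 + q) * symmJacksonIntegral q (fun x => |x| * f (x ^ 2)) =
      2 * jacksonIntegral (q ^ 2) f := by
  have hterm (k : ℕ) : (|q ^ k| * f ((q ^ k) ^ 2) + |-q ^ k| * f ((-q ^ k) ^ 2)) * q ^ k =
      2 * (f ((q ^ 2) ^ k) * (q ^ 2) ^ k) := by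
    rw [abs_neg, neg_sq, abs_of_nonneg (pow_nonneg hq k), ← pow_mul, ← pow_mul, mul_comm k 2]
    ring
  simp only [symmJacksonIntegral, jacksonIntegral, hterm, tsum_mul_left]
  ring

theorem abs_rpow_two_mul_add_one {x : ℝ} (hx : x ≠ 0) (α : ℝ) :
    |x| ^ (2 * α + 1) = |x| * (x ^ 2) ^ α := by
  have hpos : 0 < |x| := abs_pos.2 hx
  rw [rpow_add hpos, rpow_one, ← sq_abs, ← rpow_natCast, ← rpow_mul hpos.le, mul_comm]
  norm_num

theorem even_qHermite_orthonormal_general (q α κ : ℝ) (hq0 : 0 < q)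
    (v ω : ℝ → ℝ)
    (hv : ∀ x : ℝ, 0 < x →
      v x = x ^ α * ∏' l : ℕ, (1 - q ^ (2 * (l + 1)) * κ ^ 2 * x))
    (hω : ∀ x : ℝ,
      ω x = |x| ^ (2 * α + 1) * ∏' l : ℕ, (1 - q ^ (2 * (l + 1)) * κ ^ 2 * x ^ 2))
    (p : ℕ → ℝ → ℝ)
    (horth : ∀ m n : ℕ,
      (1 - q ^ 2) * ∑' k : ℕ,
          p m (q ^ (2 * k)) * p n (q ^ (2 * k)) * v (q ^ (2 * k)) * q ^ (2 * k)
        = if m = n then 1 else 0)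
    (P : ℕ → ℝ → ℝ)
    (hP : ∀ (n : ℕ) (x : ℝ), P (2 * n) x = Real.sqrt ((1 + q) / 2) * p n (x ^ 2)) :
    ∀ m n : ℕ,
      (1 - q) * ∑' k : ℕ,
          (P (2 * m) (q ^ k) * P (2 * n) (q ^ k) * ω (q ^ k)
            + P (2 * m) (-(q ^ k)) * P (2 * n) (-(q ^ k)) * ω (-(q ^ k))) * q ^ k
        = if m = n then 1 else 0 := by
  intro m n
  have hweight : ∀ x ≠ 0, ω x = |x| * v (x ^ 2) := by
    intro x hx
    rw [hω, hv _ (by positivity), abs_rpow_two_mul_add_one hx]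
    ring
  have hintegrand : ∀ x ≠ 0, P (2 * m) x * P (2 * n) x * ω x =
      |x| * ((1 + q) / 2 * (p m (x ^ 2) * p n (x ^ 2) * v (x ^ 2))) := by
    intro x hx
    have hsqrt := Real.mul_self_sqrt (show 0 ≤ (1 + q) / 2 by positivity)
    rw [hP, hP, hweight x hx]
    linear_combination |x| * p m (x ^ 2) * p n (x ^ 2) * v (x ^ 2) * hsqrt
  have hlaguerre : jacksonIntegral (q ^ 2) (fun y => p m y * p n y * v y) =
      if m = n then 1 else 0 := by
    simpa only [jacksonIntegral, ← pow_mul] using horth m n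
  have key := symmJacksonIntegral_abs_mul_comp_sq hq0.le
    (fun y => (1 + q) / 2 * (p m y * p n y * v y))
  rw [← symmJacksonIntegral_congr hq0.ne' hintegrand, jacksonIntegral_const_mul,
    hlaguerre] at key
  change symmJacksonIntegral q (fun x => P (2 * m) x * P (2 * n) x * ω x) = _
  apply mul_left_cancel₀ (show 1 + q ≠ 0 by positivity)
  rw [key]
  ring

/-- Orthonormality of the even generalized q-Hermite polynomials
`P (2n) x = √((1+q)/2) · pₙ(x²)` with respect to the Jackson q-integral of the
generalized q-Hermite weight `ω` on [−1,1], induced by the orthonormality of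
the little q-Laguerre polynomials `pₙ` with respect to the Jackson q²-integral
of the little q-Laguerre weight `v` on [0,1]. -/
theorem even_qHermite_orthonormal (q α κ : ℝ) (hq0 : 0 < q) (hq1 : q < 1)
    (hα : -1 < α) (hκ : 0 ≤ κ)
    (v ω : ℝ → ℝ)
    (hv : ∀ x : ℝ, 0 < x →
      v x = x ^ α * ∏' l : ℕ, (1 - q ^ (2 * (l + 1)) * κ ^ 2 * x))
    (hω : ∀ x : ℝ,
      ω x = |x| ^ (2 * α + 1) * ∏' l : ℕ, (1 - q ^ (2 * (l + 1)) * κ ^ 2 * x ^ 2))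
    (p : ℕ → ℝ → ℝ)
    (hsum : ∀ m n : ℕ, Summable (fun k : ℕ =>
      |p m (q ^ (2 * k)) * p n (q ^ (2 * k)) * v (q ^ (2 * k)) * q ^ (2 * k)|))
    (horth : ∀ m n : ℕ,
      (1 - q ^ 2) * ∑' k : ℕ,
          p m (q ^ (2 * k)) * p n (q ^ (2 * k)) * v (q ^ (2 * k)) * q ^ (2 * k)
        = if m = n then 1 else 0)
    (P : ℕ → ℝ → ℝ)
    (hP : ∀ (n : ℕ) (x : ℝ), P (2 * n) x = Real.sqrt ((1 + q) / 2) * p n (x ^ 2)) :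
    ∀ m n : ℕ,
      (1 - q) * ∑' k : ℕ,
          (P (2 * m) (q ^ k) * P (2 * n) (q ^ k) * ω (q ^ k)
            + P (2 * m) (-(q ^ k)) * P (2 * n) (-(q ^ k)) * ω (-(q ^ k))) * q ^ k
        = if m = n then 1 else 0 :=
  even_qHermite_orthonormal_general q α κ hq0 v ω hv hω p horth P hP
end

section
/- Fourier expansion of the t-derivative of Laguerre-type orthonormal polynomials (Theorem 2.3). Let α > −1 and let I ⊆ (0,∞) be an open interval. Let p : ℕ → I → ℝ → ℝ, a, b : ℕ → I → ℝ with a_0 ≡ 0 and p_{−1} ≡ 0, and C : ℕ → ℕ → I → ℝ. Assume for all t ∈ I: (i) for all m, n: the function x ↦ p_m(t,x)·p_n(t,x)·x^α·e^{−tx} is Lebesgue integrable on (0,∞) and ∫_0^∞ p_m(t,x)·p_n(t,x)·x^α·e^{−tx} dx = δ_{mn}; (ii) for all n and x > 0: x·p_n(t,x) = a_{n+1}(t)·p_{n+1}(t,x) + b_n(t)·p_n(t,x) + a_n(t)·p_{n−1}(t,x); (iii) for all n and x > 0 the partial derivative ∂_t p_n(t,x) exists and ∂_t p_n(t,x) =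 Σ_{k=0}^n C_{kn}(t)·p_k(t,x); (iv) for all m, n: the function x ↦ x·p_m(t,x)·p_n(t,x)·x^α·e^{−tx} is integrable and ∫_0^∞ [∂_t p_m(t,x)·p_n(t,x) + p_m(t,x)·∂_t p_n(t,x) − x·p_m(t,x)·p_n(t,x)]·x^α·e^{−tx} dx = 0. Then for all n and t: C_{nn}(t) = b_n(t)/2, C_{n−1,n}(t) = a_n(t), and C_{mn}(t) = 0 for all m < n−1; consequently ∂_t p_n(t,x) = (b_n(t)/2)·p_n(t,x) + a_n(t)·p_{n−1}(t,x) for all x > 0. -/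
open MeasureTheory Finset

/-
Write `⟨f, g⟩ = ∫ f g w` for the weighted inner product. Differentiating `⟨p_m, p_n⟩ = δ_{mn}`
in `t` gives `⟨∂ₜp_m, p_n⟩ + ⟨p_m, ∂ₜp_n⟩ = ⟨x p_m, p_n⟩`. By orthonormality `⟨∂ₜp_m, p_n⟩` is
`C_{nm}` for `n ≤ m` and `0` otherwise, and by the three-term recurrence the right side is the
`(m, n)` entry of the Jacobi matrix. Reading this identity on and above the diagonal yields the
coefficients, and the expansion of `∂ₜp_n` collapses to two terms.
-/

/-- Orthonormality in `L²(w μ)`; integrability of the products is required explicitly since the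
Bochner integral of a non-integrable function is `0`. -/
structure IsWeightedOrthonormal {X : Type*} [MeasurableSpace X] (μ : Measure X) (w : X → ℝ)
    (P : ℕ → X → ℝ) : Prop where
  integrable : ∀ j k, Integrable (fun x => P j x * P k x * w x) μ
  integral_eq : ∀ j k, ∫ x, P j x * P k x * w x ∂μ = if j = k then 1 else 0

/-- The matrix of multiplication by `x` in the basis of a three-term recurrence
`x pₙ = aₙ₊₁ pₙ₊₁ + bₙ pₙ + aₙ pₙ₋₁`. At `m = 0` the truncated `m - 1` adds `a 0` to the
diagonal entry, so this is the symmetric tridiagonal Jacobi matrix only when `a 0 = 0`. -/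
def jacobiMatrix (a b : ℕ → ℝ) (m n : ℕ) : ℝ :=
  a (m + 1) * (if m + 1 = n then 1 else 0) + b m * (if m = n then 1 else 0)
    + a m * (if m - 1 = n then 1 else 0)

namespace IsWeightedOrthonormal

variable {X : Type*} [MeasurableSpace X] {μ : Measure X} {w : X → ℝ} {P : ℕ → X → ℝ}

theorem integrable_const_mul (h : IsWeightedOrthonormal μ w P) (c : ℝ) (j k : ℕ) :
    Integrable (fun x => c * P j x * P k x * w x) μ := by
  simpa only [mul_assoc] using (h.integrable j k).const_mul c

theorem integral_const_mul (h : IsWeightedOrthonormal μ w P) (c : ℝ) (j k : ℕ) :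
    ∫ x, c * P j x * P k x * w x ∂μ = c * if j = k then 1 else 0 := by
  rw [← h.integral_eq j k, ← MeasureTheory.integral_const_mul]
  simp only [mul_assoc]

theorem integrable_sum_mul (h : IsWeightedOrthonormal μ w P) (c : ℕ → ℝ) (s : Finset ℕ)
    (k : ℕ) : Integrable (fun x => (∑ j ∈ s, c j * P j x) * P k x * w x) μ := by
  simp only [sum_mul]
  exact integrable_finsetSum s fun j _ => h.integrable_const_mul (c j) j k

theorem integral_sum_mul (h : IsWeightedOrthonormal μ w P) (c : ℕ → ℝ) (s : Finset ℕ)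
    (k : ℕ) : ∫ x, (∑ j ∈ s, c j * P j x) * P k x * w x ∂μ = if k ∈ s then c k else 0 := by
  simp only [sum_mul]
  rw [integral_finsetSum s fun j _ => h.integrable_const_mul (c j) j k]
  simp only [h.integral_const_mul, mul_ite, mul_one, mul_zero, sum_ite_eq']

theorem integrable_three_term (h : IsWeightedOrthonormal μ w P) (a b : ℕ → ℝ) (n k : ℕ) :
    Integrable
      (fun x => (a (n + 1) * P (n + 1) x + b n * P n x + a n * P (n - 1) x) * P k x * w x) μ := by
  simp only [add_mul]
  exact ((h.integrable_const_mul _ _ k).add (h.integrable_const_mul _ _ k)).add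
    (h.integrable_const_mul _ _ k)

theorem integral_three_term (h : IsWeightedOrthonormal μ w P) (a b : ℕ → ℝ) (n k : ℕ) :
    ∫ x, (a (n + 1) * P (n + 1) x + b n * P n x + a n * P (n - 1) x) * P k x * w x ∂μ
      = jacobiMatrix a b n k := by
  simp only [add_mul]
  rw [integral_add _ (h.integrable_const_mul _ _ k),
    integral_add (h.integrable_const_mul _ _ k) (h.integrable_const_mul _ _ k),
    h.integral_const_mul, h.integral_const_mul, h.integral_const_mul, jacobiMatrix]
  exact (h.integrable_const_mul _ _ k).add (h.integrable_const_mul _ _ k)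

theorem coeff_add_coeff_eq_jacobi (h : IsWeightedOrthonormal μ w P) {D : ℕ → X → ℝ}
    {g : X → ℝ} {C : ℕ → ℕ → ℝ} {a b : ℕ → ℝ}
    (hexp : ∀ n, D n =ᵐ[μ] fun x => ∑ k ∈ range (n + 1), C k n * P k x)
    (hrec : ∀ n, (fun x => g x * P n x) =ᵐ[μ]
      fun x => a (n + 1) * P (n + 1) x + b n * P n x + a n * P (n - 1) x)
    (hderiv : ∀ m n,
      ∫ x, (D m x * P n x + P m x * D n x - g x * P m x * P n x) * w x ∂μ = 0) (m n : ℕ) :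
    (if n ≤ m then C n m else 0) + (if m ≤ n then C m n else 0) = jacobiMatrix a b m n := by
  have hD_ae : ∀ i j, (fun x => D i x * P j x * w x) =ᵐ[μ]
      fun x => (∑ k ∈ range (i + 1), C k i * P k x) * P j x * w x := fun i j => by
    filter_upwards [hexp i] with x hx
    rw [hx]
  have hD_int : ∀ i j, Integrable (fun x => D i x * P j x * w x) μ := fun i j =>
    (h.integrable_sum_mul _ _ j).congr (hD_ae i j).symm
  have hD : ∀ i j, ∫ x, D i x * P j x * w x ∂μ = if j ≤ i then C j i else 0 := fun i j => by
    rw [integral_congr_ae (hD_ae i j), h.integral_sum_mul]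
    simp only [mem_range, Nat.lt_succ_iff]
  have hg_ae : (fun x => g x * P m x * P n x * w x) =ᵐ[μ]
      fun x => (a (m + 1) * P (m + 1) x + b m * P m x + a m * P (m - 1) x) * P n x * w x := by
    filter_upwards [hrec m] with x hx
    rw [hx]
  have hsplit : ∀ x, (D m x * P n x + P m x * D n x - g x * P m x * P n x) * w x
      = D m x * P n x * w x + D n x * P m x * w x - g x * P m x * P n x * w x := fun x => by
    ring
  have h0 := hderiv m n
  simp only [hsplit] at h0
  rw [integral_sub _ ((h.integrable_three_term a b m n).congr hg_ae.symm),
    integral_add (hD_int m n) (hD_int n m), hD, hD, integral_congr_ae hg_ae,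
    h.integral_three_term] at h0
  · linarith
  · exact (hD_int m n).add (hD_int n m)

end IsWeightedOrthonormal

theorem coeff_eq_of_add_eq_jacobi {a b : ℕ → ℝ} {C : ℕ → ℕ → ℝ} (ha0 : a 0 = 0)
    (hC : ∀ m n, (if n ≤ m then C n m else 0) + (if m ≤ n then C m n else 0)
      = jacobiMatrix a b m n) (n : ℕ) :
    C n n = b n / 2 ∧ (1 ≤ n → C (n - 1) n = a n) ∧ ∀ m, m + 1 < n → C m n = 0 := by
  refine ⟨?_, fun hn => ?_, fun m hm => ?_⟩
  · have hdiag := hC n n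
    rcases n with _ | n <;> simp [jacobiMatrix, ha0] at hdiag <;> linarith
  · obtain ⟨k, rfl⟩ := Nat.exists_eq_add_of_le' hn
    simpa [jacobiMatrix] using hC k (k + 1)
  · simpa [jacobiMatrix, show ¬ n ≤ m by omega, show m ≤ n by omega, show m + 1 ≠ n by omega,
      show m ≠ n by omega, show m - 1 ≠ n by omega] using hC m n

theorem sum_range_succ_eq_of_eq_zero {n : ℕ} {c f : ℕ → ℝ} {a : ℝ}
    (hzero : ∀ k, k + 1 < n → c k = 0) (hsub : 1 ≤ n → c (n - 1) = a) (ha : n = 0 → a = 0) :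
    ∑ k ∈ range (n + 1), c k * f k = c n * f n + a * f (n - 1) := by
  rcases n with _ | n
  · simp [ha rfl]
  · rw [sum_range_succ, sum_range_succ, sum_eq_zero fun k hk => by
      rw [hzero k (by simpa using mem_range.mp hk), zero_mul], ← hsub le_add_self]
    simp only [add_tsub_cancel_right]
    ring

theorem laguerre_deriv_fourier_expansion_general (α : ℝ) (I : Set ℝ)
    (p dtp : ℕ → ℝ → ℝ → ℝ) (a b : ℕ → ℝ → ℝ) (C : ℕ → ℕ → ℝ → ℝ)
    (ha0 : ∀ t : ℝ, a 0 t = 0)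
    (horthint : ∀ t ∈ I, ∀ m n : ℕ,
      IntegrableOn (fun x : ℝ => p m t x * p n t x * x ^ α * Real.exp (-t * x))
        (Set.Ioi 0))
    (horth : ∀ t ∈ I, ∀ m n : ℕ,
      ∫ x in Set.Ioi (0 : ℝ), p m t x * p n t x * x ^ α * Real.exp (-t * x)
        = if m = n then 1 else 0)
    (hrec : ∀ t ∈ I, ∀ n : ℕ, ∀ x : ℝ, 0 < x →
      x * p n t x = a (n + 1) t * p (n + 1) t x + b n t * p n t x
        + a n t * p (n - 1) t x)
    (hexp : ∀ t ∈ I, ∀ n : ℕ, ∀ x : ℝ, 0 < x →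
      dtp n t x = ∑ k ∈ Finset.range (n + 1), C k n t * p k t x)
    (hdorth : ∀ t ∈ I, ∀ m n : ℕ,
      ∫ x in Set.Ioi (0 : ℝ),
        (dtp m t x * p n t x + p m t x * dtp n t x - x * p m t x * p n t x)
          * x ^ α * Real.exp (-t * x) = 0) :
    ∀ t ∈ I, ∀ n : ℕ,
      C n n t = b n t / 2 ∧
      (1 ≤ n → C (n - 1) n t = a n t) ∧
      (∀ m : ℕ, m + 1 < n → C m n t = 0) ∧
      (∀ x : ℝ, 0 < x →
        dtp n t x = b n t / 2 * p n t x + a n t * p (n - 1) t x) := by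
  intro t ht n
  have hON : IsWeightedOrthonormal (volume.restrict (Set.Ioi 0))
      (fun x => x ^ α * Real.exp (-t * x)) (fun k x => p k t x) :=
    ⟨fun j k => by simpa only [mul_assoc, IntegrableOn] using horthint t ht j k,
      fun j k => by simpa only [mul_assoc] using horth t ht j k⟩
  have hjacobi := hON.coeff_add_coeff_eq_jacobi (D := fun k x => dtp k t x) (g := fun x => x)
    (C := fun k n => C k n t) (a := fun n => a n t) (b := fun n => b n t)
    (fun n => (ae_restrict_iff' measurableSet_Ioi).2 (.of_forall (hexp t ht n)))
    (fun n => (ae_restrict_iff' measurableSet_Ioi).2 (.of_forall (hrec t ht n)))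
    (fun m n => by simpa only [mul_assoc] using hdorth t ht m n)
  obtain ⟨hdiag, hsub, hzero⟩ := coeff_eq_of_add_eq_jacobi (C := fun k n => C k n t)
    (a := fun n => a n t) (b := fun n => b n t) (ha0 t) hjacobi n
  refine ⟨hdiag, hsub, hzero, fun x hx => ?_⟩
  rw [hexp t ht n x hx, sum_range_succ_eq_of_eq_zero hzero hsub (fun hn => hn ▸ ha0 t), hdiag]

/-- Theorem 2.3: Fourier expansion of the t-derivative of the orthonormal
polynomials of the deformed Laguerre weight `x^α · exp(−t·x)` on (0,∞).
Here `dtp n t x` denotes the partial derivative ∂ₜ pₙ(t,x), `C k n t` are the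
Fourier coefficients of the expansion of ∂ₜ pₙ(t,·) in the basis {pₖ(t,·)},
and `a n t`, `b n t` are the three-term recurrence coefficients
(with the conventions `a 0 ≡ 0` and `p₋₁ ≡ 0`). -/
theorem laguerre_deriv_fourier_expansion (α : ℝ) (hα : -1 < α) (I : Set ℝ)
    (hIint : ∃ c d : ℝ, I = Set.Ioo c d) (hIpos : I ⊆ Set.Ioi 0)
    (p dtp : ℕ → ℝ → ℝ → ℝ) (a b : ℕ → ℝ → ℝ) (C : ℕ → ℕ → ℝ → ℝ)
    (ha0 : ∀ t : ℝ, a 0 t = 0)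
    (horthint : ∀ t ∈ I, ∀ m n : ℕ,
      IntegrableOn (fun x : ℝ => p m t x * p n t x * x ^ α * Real.exp (-t * x))
        (Set.Ioi 0))
    (horth : ∀ t ∈ I, ∀ m n : ℕ,
      ∫ x in Set.Ioi (0 : ℝ), p m t x * p n t x * x ^ α * Real.exp (-t * x)
        = if m = n then 1 else 0)
    (hrec : ∀ t ∈ I, ∀ n : ℕ, ∀ x : ℝ, 0 < x →
      x * p n t x = a (n + 1) t * p (n + 1) t x + b n t * p n t x
        + a n t * p (n - 1) t x)
    (hderiv : ∀ t ∈ I, ∀ n : ℕ, ∀ x : ℝ, 0 < x →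
      HasDerivAt (fun s : ℝ => p n s x) (dtp n t x) t)
    (hexp : ∀ t ∈ I, ∀ n : ℕ, ∀ x : ℝ, 0 < x →
      dtp n t x = ∑ k ∈ Finset.range (n + 1), C k n t * p k t x)
    (hxint : ∀ t ∈ I, ∀ m n : ℕ,
      IntegrableOn (fun x : ℝ => x * p m t x * p n t x * x ^ α * Real.exp (-t * x))
        (Set.Ioi 0))
    (hdorth : ∀ t ∈ I, ∀ m n : ℕ,
      ∫ x in Set.Ioi (0 : ℝ),
        (dtp m t x * p n t x + p m t x * dtp n t x - x * p m t x * p n t x)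
          * x ^ α * Real.exp (-t * x) = 0) :
    ∀ t ∈ I, ∀ n : ℕ,
      C n n t = b n t / 2 ∧
      (1 ≤ n → C (n - 1) n t = a n t) ∧
      (∀ m : ℕ, m + 1 < n → C m n t = 0) ∧
      (∀ x : ℝ, 0 < x →
        dtp n t x = b n t / 2 * p n t x + a n t * p (n - 1) t x) :=
  laguerre_deriv_fourier_expansion_general α I p dtp a b C ha0 horthint horth hrec hexp hdorth
end

section
/- Fourier expansion of the t-derivative of Hermite-type orthonormal polynomials (Theorem 2.5). Let α > −1 and let I ⊆ (0,∞) be an open interval. Let P : ℕ → I → ℝ → ℝ, A : ℕ → I → ℝ with A_0 ≡ 0 and P_{−1} ≡ P_{−2} ≡ 0, and C : ℕ → ℕ → I → ℝ. Assume for all t ∈ I: (i) for all m, n: the function x ↦ P_m(t,x)·P_n(t,x)·|x|^{2α+1}·e^{−tx²} is Lebesgue integrable on ℝ and ∫_ℝ P_m(t,x)·P_n(t,x)·|x|^{2α+1}·e^{−tx²} dx = δ_{mn}; (ii) for all n and x: x·P_n(t,x) = A_{n+1}(t)·P_{n+1}(t,x) + A_n(t)·P_{n−1}(t,x); (iii)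 for all n and x the partial derivative ∂_t P_n(t,x) exists and ∂_t P_n(t,x) = Σ_{k=0}^n C_{kn}(t)·P_k(t,x); (iv) for all m, n: the function x ↦ x²·P_m(t,x)·P_n(t,x)·|x|^{2α+1}·e^{−tx²} is integrable and ∫_ℝ [∂_t P_m(t,x)·P_n(t,x) + P_m(t,x)·∂_t P_n(t,x) − x²·P_m(t,x)·P_n(t,x)]·|x|^{2α+1}·e^{−tx²} dx = 0. Then for all n and t: C_{nn}(t) = (1/2)·(A_{n+1}(t)² + A_n(t)²), C_{n−2,n}(t) = A_{n−1}(t)·A_n(t), and C_{mn}(t) = 0 for all other m < n; consequced ∂_t P_n(t,x) = (1/2)·(A_{n+1}(t)² + A_n(t)²)·P_n(t,x) + A_{n−1}(t)·A_n(t)·P_{n−2}(t,x). -/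
/-!
Differentiating `∫ Pₘ Pₙ w = δₘₙ` in `t`, with `∂ₜ w = -x² w`, gives
`⟨∂ₜPₘ, Pₙ⟩ + ⟨Pₘ, ∂ₜPₙ⟩ = ⟨x² Pₘ, Pₙ⟩`. By orthonormality the left side is `Cₙₘ + Cₘₙ`
(only one of which is present unless `m = n`), while applying the three-term recurrence twice
shows that `x² Pₘ` only involves `Pₘ₊₂`, `Pₘ`, `Pₘ₋₂`, with explicit coefficients.
-/

open MeasureTheory Finset

structure IsWeightedOrthonormal_s6 (w : ℝ → ℝ) (p : ℕ → ℝ → ℝ) : Prop where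
  integrable_mul : ∀ m n, Integrable fun x => p m x * p n x * w x
  integral_mul : ∀ m n, ∫ x, p m x * p n x * w x = if m = n then 1 else 0

/-- The condition `a₀ = 0` makes the junk value `p (0 - 1) = p 0` harmless. -/
structure HasThreeTermRecurrence (p : ℕ → ℝ → ℝ) (a : ℕ → ℝ) : Prop where
  coeff_zero : a 0 = 0
  mul_eq : ∀ n x, x * p n x = a (n + 1) * p (n + 1) x + a n * p (n - 1) x

namespace HasThreeTermRecurrence

variable {p : ℕ → ℝ → ℝ} {a : ℕ → ℝ}

theorem sq_mul_eq (hrec : HasThreeTermRecurrence p a) (m : ℕ) (x : ℝ) :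
    x ^ 2 * p m x = a (m + 1) * a (m + 2) * p (m + 2) x + (a (m + 1) ^ 2 + a m ^ 2) * p m x
      + a m * a (m - 1) * p (m - 2) x := by
  have hprev : a m * (x * p (m - 1) x) = a m * (a m * p m x + a (m - 1) * p (m - 2) x) := by
    cases m with
    | zero => simp [hrec.coeff_zero]
    | succ m => simpa using congrArg (a (m + 1) * ·) (hrec.mul_eq m x)
  have hnext := hrec.mul_eq (m + 1) x
  rw [Nat.add_sub_cancel] at hnext
  linear_combination x * hrec.mul_eq m x + a (m + 1) * hnext + hprev

end HasThreeTermRecurrence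

namespace IsWeightedOrthonormal_s6

variable {w : ℝ → ℝ} {p : ℕ → ℝ → ℝ}

theorem integrable_sum_mul_and_integral_eq (hp : IsWeightedOrthonormal_s6 w p) (c : ℕ → ℝ) (n m : ℕ) :
    (Integrable fun x => (∑ k ∈ range (n + 1), c k * p k x) * p m x * w x) ∧
      ∫ x, (∑ k ∈ range (n + 1), c k * p k x) * p m x * w x = if m ≤ n then c m else 0 := by
  have hexpand : (fun x => (∑ k ∈ range (n + 1), c k * p k x) * p m x * w x) =
      fun x => ∑ k ∈ range (n + 1), c k * (p k x * p m x * w x) := by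
    ext x
    rw [sum_mul, sum_mul]
    exact sum_congr rfl fun _ _ => by ring
  have hint : ∀ k ∈ range (n + 1), Integrable fun x => c k * (p k x * p m x * w x) :=
    fun k _ => (hp.integrable_mul k m).const_mul (c k)
  rw [hexpand, integral_finsetSum _ hint]
  refine ⟨integrable_finsetSum _ hint, ?_⟩
  simp only [integral_const_mul, hp.integral_mul, mul_ite, mul_one, mul_zero, sum_ite_eq',
    mem_range, Nat.lt_succ_iff]

variable {a : ℕ → ℝ}

theorem integrable_sq_mul_and_integral_eq (hp : IsWeightedOrthonormal_s6 w p)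
    (hrec : HasThreeTermRecurrence p a) (m k : ℕ) :
    (Integrable fun x => x ^ 2 * p m x * p k x * w x) ∧
      ∫ x, x ^ 2 * p m x * p k x * w x =
        (if m + 2 = k then a (m + 1) * a (m + 2) else 0)
          + (if m = k then a (m + 1) ^ 2 + a m ^ 2 else 0)
          + (if m - 2 = k then a m * a (m - 1) else 0) := by
  have hexpand : (fun x => x ^ 2 * p m x * p k x * w x) = fun x =>
      a (m + 1) * a (m + 2) * (p (m + 2) x * p k x * w x)
        + (a (m + 1) ^ 2 + a m ^ 2) * (p m x * p k x * w x)
        + a m * a (m - 1) * (p (m - 2) x * p k x * w x) := by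
    ext x
    rw [hrec.sq_mul_eq]
    ring
  have hint₁ := (hp.integrable_mul (m + 2) k).const_mul (a (m + 1) * a (m + 2))
  have hint₂ := (hp.integrable_mul m k).const_mul (a (m + 1) ^ 2 + a m ^ 2)
  have hint₃ := (hp.integrable_mul (m - 2) k).const_mul (a m * a (m - 1))
  have hint₁₂ : Integrable fun x => a (m + 1) * a (m + 2) * (p (m + 2) x * p k x * w x)
      + (a (m + 1) ^ 2 + a m ^ 2) * (p m x * p k x * w x) := hint₁.add hint₂
  rw [hexpand]
  refine ⟨hint₁₂.add hint₃, ?_⟩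
  rw [integral_add hint₁₂ hint₃, integral_add hint₁ hint₂]
  simp only [integral_const_mul, hp.integral_mul, mul_ite, mul_one, mul_zero]

variable {q : ℕ → ℝ → ℝ} {c : ℕ → ℕ → ℝ}

theorem coeff_add_coeff_eq (hp : IsWeightedOrthonormal_s6 w p) (hrec : HasThreeTermRecurrence p a)
    (hq : ∀ n x, q n x = ∑ k ∈ range (n + 1), c k n * p k x)
    (hd : ∀ m n, ∫ x, (q m x * p n x + p m x * q n x - x ^ 2 * p m x * p n x) * w x = 0)
    (m k : ℕ) :
    (if k ≤ m then c k m else 0) + (if m ≤ k then c m k else 0) =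
      (if m + 2 = k then a (m + 1) * a (m + 2) else 0)
        + (if m = k then a (m + 1) ^ 2 + a m ^ 2 else 0)
        + (if m - 2 = k then a m * a (m - 1) else 0) := by
  obtain ⟨hintₘ, hₘ⟩ := hp.integrable_sum_mul_and_integral_eq (c · m) m k
  obtain ⟨hintₖ, hₖ⟩ := hp.integrable_sum_mul_and_integral_eq (c · k) k m
  obtain ⟨hint_sq, h_sq⟩ := hp.integrable_sq_mul_and_integral_eq hrec m k
  have hsplit : (fun x => (q m x * p k x + p m x * q k x - x ^ 2 * p m x * p k x) * w x) =
      fun x => ((∑ j ∈ range (m + 1), c j m * p j x) * p k x * w x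
        + (∑ j ∈ range (k + 1), c j k * p j x) * p m x * w x)
        - x ^ 2 * p m x * p k x * w x := by
    ext x
    rw [hq, hq]
    ring
  have h := hd m k
  rw [hsplit, integral_sub ?_ hint_sq, integral_add hintₘ hintₖ, hₘ, hₖ, h_sq] at h
  · linarith
  · exact hintₘ.add hintₖ

theorem coeff_self_eq (hp : IsWeightedOrthonormal_s6 w p) (hrec : HasThreeTermRecurrence p a)
    (hq : ∀ n x, q n x = ∑ k ∈ range (n + 1), c k n * p k x)
    (hd : ∀ m n, ∫ x, (q m x * p n x + p m x * q n x - x ^ 2 * p m x * p n x) * w x = 0)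
    (n : ℕ) :
    c n n = 1 / 2 * (a (n + 1) ^ 2 + a n ^ 2) := by
  have h := coeff_add_coeff_eq hp hrec hq hd n n
  have hsub : (if n - 2 = n then a n * a (n - 1) else 0) = 0 := by
    rcases n with _ | n
    · simp [hrec.coeff_zero]
    · exact if_neg (by omega)
  rw [if_pos le_rfl, if_neg (show n + 2 ≠ n by omega), if_pos rfl, hsub] at h
  linarith

theorem coeff_eq_of_lt (hp : IsWeightedOrthonormal_s6 w p) (hrec : HasThreeTermRecurrence p a)
    (hq : ∀ n x, q n x = ∑ k ∈ range (n + 1), c k n * p k x)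
    (hd : ∀ m n, ∫ x, (q m x * p n x + p m x * q n x - x ^ 2 * p m x * p n x) * w x = 0)
    {m n : ℕ} (hmn : m < n) :
    c m n = if m + 2 = n then a (m + 1) * a (m + 2) else 0 := by
  have h := coeff_add_coeff_eq hp hrec hq hd m n
  rw [if_neg (show ¬n ≤ m by omega), if_pos hmn.le, if_neg hmn.ne,
    if_neg (show m - 2 ≠ n by omega)] at h
  linarith

theorem expansion_eq (hp : IsWeightedOrthonormal_s6 w p) (hrec : HasThreeTermRecurrence p a)
    (hq : ∀ n x, q n x = ∑ k ∈ range (n + 1), c k n * p k x)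
    (hd : ∀ m n, ∫ x, (q m x * p n x + p m x * q n x - x ^ 2 * p m x * p n x) * w x = 0)
    (n : ℕ) (x : ℝ) :
    q n x = 1 / 2 * (a (n + 1) ^ 2 + a n ^ 2) * p n x + a (n - 1) * a n * p (n - 2) x := by
  have hlower : ∑ k ∈ range n, c k n * p k x = a (n - 1) * a n * p (n - 2) x := by
    rcases lt_or_ge n 2 with hn | hn
    · rw [sum_eq_zero fun k hk => by
        rw [coeff_eq_of_lt hp hrec hq hd (mem_range.1 hk), if_neg (by omega), zero_mul]]
      interval_cases n <;> simp [hrec.coeff_zero]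
    · rw [sum_eq_single_of_mem (n - 2) (mem_range.2 (by omega)) fun k hk hkn => by
        rw [coeff_eq_of_lt hp hrec hq hd (mem_range.1 hk), if_neg (by omega), zero_mul]]
      rw [coeff_eq_of_lt hp hrec hq hd (by omega), if_pos (by omega),
        show n - 2 + 1 = n - 1 by omega, show n - 2 + 2 = n by omega]
  rw [hq, sum_range_succ, hlower, coeff_self_eq hp hrec hq hd]
  ring

end IsWeightedOrthonormal_s6

theorem hermite_deriv_fourier_expansion_general (α : ℝ) (I : Set ℝ)
    (P dtP : ℕ → ℝ → ℝ → ℝ) (A : ℕ → ℝ → ℝ) (C : ℕ → ℕ → ℝ → ℝ)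
    (hA0 : ∀ t : ℝ, A 0 t = 0)
    (horthint : ∀ t ∈ I, ∀ m n : ℕ,
      Integrable (fun x : ℝ =>
        P m t x * P n t x * |x| ^ (2 * α + 1) * Real.exp (-t * x ^ 2)))
    (horth : ∀ t ∈ I, ∀ m n : ℕ,
      ∫ x : ℝ, P m t x * P n t x * |x| ^ (2 * α + 1) * Real.exp (-t * x ^ 2)
        = if m = n then 1 else 0)
    (hrec : ∀ t ∈ I, ∀ n : ℕ, ∀ x : ℝ,
      x * P n t x = A (n + 1) t * P (n + 1) t x + A n t * P (n - 1) t x)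
    (hexp : ∀ t ∈ I, ∀ n : ℕ, ∀ x : ℝ,
      dtP n t x = ∑ k ∈ Finset.range (n + 1), C k n t * P k t x)
    (hdorth : ∀ t ∈ I, ∀ m n : ℕ,
      ∫ x : ℝ,
        (dtP m t x * P n t x + P m t x * dtP n t x - x ^ 2 * P m t x * P n t x)
          * |x| ^ (2 * α + 1) * Real.exp (-t * x ^ 2) = 0) :
    ∀ t ∈ I, ∀ n : ℕ,
      C n n t = 1 / 2 * (A (n + 1) t ^ 2 + A n t ^ 2) ∧
      (2 ≤ n → C (n - 2) n t = A (n - 1) t * A n t) ∧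
      (∀ m : ℕ, m < n → m + 2 ≠ n → C m n t = 0) ∧
      (∀ x : ℝ,
        dtP n t x = 1 / 2 * (A (n + 1) t ^ 2 + A n t ^ 2) * P n t x
          + A (n - 1) t * A n t * P (n - 2) t x) := by
  intro t ht n
  have hp : IsWeightedOrthonormal_s6 (fun x => |x| ^ (2 * α + 1) * Real.exp (-t * x ^ 2)) (P · t) :=
    ⟨fun m n => by simpa only [mul_assoc] using horthint t ht m n,
      fun m n => by simpa only [mul_assoc] using horth t ht m n⟩
  have hrec' : HasThreeTermRecurrence (P · t) (A · t) := ⟨hA0 t, hrec t ht⟩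
  have hd : ∀ m n, ∫ x, (dtP m t x * P n t x + P m t x * dtP n t x - x ^ 2 * P m t x * P n t x)
      * (|x| ^ (2 * α + 1) * Real.exp (-t * x ^ 2)) = 0 :=
    fun m n => by simpa only [mul_assoc] using hdorth t ht m n
  have hq := hexp t ht
  refine ⟨hp.coeff_self_eq hrec' hq hd n, fun hn => ?_, fun m hm hm2 => ?_,
    hp.expansion_eq hrec' hq hd n⟩
  · rw [hp.coeff_eq_of_lt hrec' hq hd (by omega : n - 2 < n), if_pos (by omega),
      show n - 2 + 1 = n - 1 by omega, show n - 2 + 2 = n by omega]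
  · rw [hp.coeff_eq_of_lt hrec' hq hd hm, if_neg hm2]

/-- Theorem 2.5: Fourier expansion of the t-derivative of the orthonormal
polynomials of the deformed Hermite-type weight `|x|^(2α+1) · exp(−t·x²)` on ℝ.
Here `dtP n t x` denotes the partial derivative ∂ₜ Pₙ(t,x), `C k n t` are the
Fourier coefficients of the expansion of ∂ₜ Pₙ(t,·) in the basis {Pₖ(t,·)},
and `A n t` are the recurrence coefficients (conventions `A 0 ≡ 0`,
`P₋₁ ≡ P₋₂ ≡ 0`, encoded via truncated subtraction and `hA0`). -/
theorem hermite_deriv_fourier_expansion (α : ℝ) (hα : -1 < α) (I : Set ℝ)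
    (hIint : ∃ c d : ℝ, I = Set.Ioo c d) (hIpos : I ⊆ Set.Ioi 0)
    (P dtP : ℕ → ℝ → ℝ → ℝ) (A : ℕ → ℝ → ℝ) (C : ℕ → ℕ → ℝ → ℝ)
    (hA0 : ∀ t : ℝ, A 0 t = 0)
    (horthint : ∀ t ∈ I, ∀ m n : ℕ,
      Integrable (fun x : ℝ =>
        P m t x * P n t x * |x| ^ (2 * α + 1) * Real.exp (-t * x ^ 2)))
    (horth : ∀ t ∈ I, ∀ m n : ℕ,
      ∫ x : ℝ, P m t x * P n t x * |x| ^ (2 * α + 1) * Real.exp (-t * x ^ 2)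
        = if m = n then 1 else 0)
    (hrec : ∀ t ∈ I, ∀ n : ℕ, ∀ x : ℝ,
      x * P n t x = A (n + 1) t * P (n + 1) t x + A n t * P (n - 1) t x)
    (hderiv : ∀ t ∈ I, ∀ n : ℕ, ∀ x : ℝ,
      HasDerivAt (fun s : ℝ => P n s x) (dtP n t x) t)
    (hexp : ∀ t ∈ I, ∀ n : ℕ, ∀ x : ℝ,
      dtP n t x = ∑ k ∈ Finset.range (n + 1), C k n t * P k t x)
    (hxint : ∀ t ∈ I, ∀ m n : ℕ,
      Integrable (fun x : ℝ =>
        x ^ 2 * P m t x * P n t x * |x| ^ (2 * α + 1) * Real.exp (-t * x ^ 2)))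
    (hdorth : ∀ t ∈ I, ∀ m n : ℕ,
      ∫ x : ℝ,
        (dtP m t x * P n t x + P m t x * dtP n t x - x ^ 2 * P m t x * P n t x)
          * |x| ^ (2 * α + 1) * Real.exp (-t * x ^ 2) = 0) :
    ∀ t ∈ I, ∀ n : ℕ,
      C n n t = 1 / 2 * (A (n + 1) t ^ 2 + A n t ^ 2) ∧
      (2 ≤ n → C (n - 2) n t = A (n - 1) t * A n t) ∧
      (∀ m : ℕ, m < n → m + 2 ≠ n → C m n t = 0) ∧
      (∀ x : ℝ,
        dtP n t x = 1 / 2 * (A (n + 1) t ^ 2 + A n t ^ 2) * P n t x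
          + A (n - 1) t * A n t * P (n - 2) t x) :=
  hermite_deriv_fourier_expansion_general α I P dtP A C hA0 horthint horth hrec hexp hdorth
end

section
/- Consequences of the master equation for the Fourier coefficients of the κ-deformed little q-Laguerre polynomials (Theorem 3.1). Let 0 < q < 1, κ ≠ 0, and set λ = (1−q)·κ. Let ξ : ℕ × ℕ → ℝ (with ξ_{mn} defined for m ≤ n) and ā, b̄ : ℕ → ℝ be real numbers such that 1 − λ·ξ_{mm} ≠ 0 for all m, and assume the master equation: for all m ≤ n, (1 − λ·ξ_{mm})·ξ_{mn} − λ·Σ_{j=0}^{m−1} ξ_{jm}·ξ_{jn} + δ_{mn}·ξ_{nn} = δ_{m,n−1}·(q/(1−q))·ā_n + δ_{mn}·(q/(1−q))·b̄_n. Then: (i) ξ_{mn} = 0 whenever m + 2 ≤ n; (ii) for all n ≥ 1: ξ_{n−1,n}·(1 − λ·ξ_{n−1,n−1}) = (q/(1−q))·ā_n; (iii) for all n ≥ 1: (1 − λ·ξ_{nn})² + (q·κ·ā_n)²/(1 − λ·ξ_{n−1,n−1})² = 1 − q·κ·b̄_n; and (iv) (1 − λ·ξ_{00})² = 1 − q·κ·b̄_0.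 -/
/-!
The master equation is triangular in `m`: the entry `ξ m n` appears multiplied by the nonzero
factor `1 - λ ξ m m`, next to a sum over the earlier rows `j < m`. Strong induction on `m`
therefore makes every `ξ m n` with `m + 2 ≤ n` vanish, so `ξ` is upper bidiagonal. In the
remaining equations the sums then collapse: the superdiagonal one gives (ii) directly, and
multiplying the diagonal one by `λ` completes the square
`1 - λ c b̄ₙ = (1 - λ ξₙₙ)² + λ² Σ_{j<n} ξⱼₙ²`,
where only `j = n - 1` survives and, by (ii), `λ ξ_{n-1,n} = λ c āₙ / (1 - λ ξ_{n-1,n-1})`.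
With `c = q / (1 - q)` one has `λ c = q κ`.
-/

open Finset

namespace LittleQLaguerre

variable {K : Type*} [Field K] (lam c : K) (ξ : ℕ → ℕ → K) (abar bbar : ℕ → K)

/-- The master equation, with `c` standing for `q / (1 - q)`. -/
def MasterEquation : Prop :=
  ∀ m n : ℕ, m ≤ n →
    (1 - lam * ξ m m) * ξ m n - lam * ∑ j ∈ range m, ξ j m * ξ j n
        + (if m = n then ξ n n else 0)
      = (if m + 1 = n then c * abar n else 0) + (if m = n then c * bbar n else 0)

variable {lam c ξ abar bbar}

theorem MasterEquation.eq_zero_of_add_two_le (hmaster : MasterEquation lam c ξ abar bbar)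
    (hnz : ∀ m, 1 - lam * ξ m m ≠ 0) : ∀ m n, m + 2 ≤ n → ξ m n = 0 := by
  intro m
  induction m using Nat.strong_induction_on with
  | _ m ih =>
    intro n hmn
    have h := hmaster m n (by omega)
    simp only [if_neg (by omega : m ≠ n), if_neg (by omega : m + 1 ≠ n), add_zero] at h
    have hsum : ∑ j ∈ range m, ξ j m * ξ j n = 0 :=
      sum_eq_zero fun j hj => by
        have hjm := mem_range.mp hj
        rw [ih j hjm n (by omega), mul_zero]
    rw [hsum, mul_zero, sub_zero] at h
    exact (mul_eq_zero.mp h).resolve_left (hnz m)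

theorem MasterEquation.superdiag_mul_eq (hmaster : MasterEquation lam c ξ abar bbar)
    (hband : ∀ m n, m + 2 ≤ n → ξ m n = 0) (n : ℕ) :
    ξ n (n + 1) * (1 - lam * ξ n n) = c * abar (n + 1) := by
  have h := hmaster n (n + 1) (by omega)
  simp only [if_neg (by omega : n ≠ n + 1), if_true, add_zero] at h
  have hsum : ∑ j ∈ range n, ξ j n * ξ j (n + 1) = 0 :=
    sum_eq_zero fun j hj => by rw [hband j (n + 1) (by have := mem_range.mp hj; omega), mul_zero]
  rw [← h, hsum]
  ring

theorem MasterEquation.diag_sq_add (hmaster : MasterEquation lam c ξ abar bbar) (n : ℕ) :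
    (1 - lam * ξ n n) ^ 2 + lam ^ 2 * ∑ j ∈ range n, ξ j n ^ 2 = 1 - lam * c * bbar n := by
  have h := hmaster n n le_rfl
  rw [if_pos rfl, if_neg (by omega), if_pos rfl, zero_add] at h
  rw [mul_assoc, ← h]
  simp only [sq]
  ring

theorem MasterEquation.diag_succ_sq_add (hmaster : MasterEquation lam c ξ abar bbar)
    (hnz : ∀ m, 1 - lam * ξ m m ≠ 0) (n : ℕ) :
    (1 - lam * ξ (n + 1) (n + 1)) ^ 2 + (lam * c * abar (n + 1)) ^ 2 / (1 - lam * ξ n n) ^ 2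
      = 1 - lam * c * bbar (n + 1) := by
  have hband := hmaster.eq_zero_of_add_two_le hnz
  have hsum : ∑ j ∈ range (n + 1), ξ j (n + 1) ^ 2 = ξ n (n + 1) ^ 2 := by
    rw [sum_range_succ, add_eq_right]
    exact sum_eq_zero fun j hj => by
      rw [hband j (n + 1) (by have := mem_range.mp hj; omega), sq, zero_mul]
  have habar : lam * c * abar (n + 1) = lam * ξ n (n + 1) * (1 - lam * ξ n n) := by
    rw [mul_assoc, ← hmaster.superdiag_mul_eq hband n]
    ring
  rw [← hmaster.diag_sq_add, hsum, habar, mul_pow,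
    mul_div_cancel_right₀ _ (pow_ne_zero 2 (hnz n))]
  ring

end LittleQLaguerre

open LittleQLaguerre in
theorem little_qLaguerre_master_equation_consequences_general
    (q κ lam : ℝ) (hq1 : q < 1)
    (hlam : lam = (1 - q) * κ)
    (ξ : ℕ → ℕ → ℝ) (abar bbar : ℕ → ℝ)
    (hnz : ∀ m : ℕ, 1 - lam * ξ m m ≠ 0)
    (hmaster : ∀ m n : ℕ, m ≤ n →
      (1 - lam * ξ m m) * ξ m n - lam * ∑ j ∈ Finset.range m, ξ j m * ξ j n
          + (if m = n then ξ n n else 0)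
        = (if m + 1 = n then q / (1 - q) * abar n else 0)
          + (if m = n then q / (1 - q) * bbar n else 0)) :
    (∀ m n : ℕ, m + 2 ≤ n → ξ m n = 0) ∧
    (∀ n : ℕ, 1 ≤ n →
      ξ (n - 1) n * (1 - lam * ξ (n - 1) (n - 1)) = q / (1 - q) * abar n) ∧
    (∀ n : ℕ, 1 ≤ n →
      (1 - lam * ξ n n) ^ 2
          + (q * κ * abar n) ^ 2 / (1 - lam * ξ (n - 1) (n - 1)) ^ 2
        = 1 - q * κ * bbar n) ∧
    (1 - lam * ξ 0 0) ^ 2 = 1 - q * κ * bbar 0 := by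
  have hmaster : MasterEquation lam (q / (1 - q)) ξ abar bbar := hmaster
  have hc : lam * (q / (1 - q)) = q * κ := by
    rw [hlam]
    field_simp [sub_ne_zero.mpr hq1.ne']
  have hband := hmaster.eq_zero_of_add_two_le hnz
  refine ⟨hband, fun n hn => ?_, fun n hn => ?_, ?_⟩
  · obtain ⟨n, rfl⟩ := Nat.exists_eq_add_of_le' hn
    exact hmaster.superdiag_mul_eq hband n
  · obtain ⟨n, rfl⟩ := Nat.exists_eq_add_of_le' hn
    simpa only [hc, Nat.add_sub_cancel] using hmaster.diag_succ_sq_add hnz n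
  · simpa [hc] using hmaster.diag_sq_add 0

/-- Theorem 3.1: consequences of the master equation for the Fourier
coefficients `ξ m n` of the κ-deformation (q-derivative) of the little
q-Laguerre orthonormal polynomials, where `abar n = aₙ(qκ)` and
`bbar n = bₙ(qκ)` are the rescaled recurrence coefficients and
`λ = (1−q)·κ`. -/
theorem little_qLaguerre_master_equation_consequences
    (q κ lam : ℝ) (hq0 : 0 < q) (hq1 : q < 1) (hκ : κ ≠ 0)
    (hlam : lam = (1 - q) * κ)
    (ξ : ℕ → ℕ → ℝ) (abar bbar : ℕ → ℝ)
    (hnz : ∀ m : ℕ, 1 - lam * ξ m m ≠ 0)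
    (hmaster : ∀ m n : ℕ, m ≤ n →
      (1 - lam * ξ m m) * ξ m n - lam * ∑ j ∈ Finset.range m, ξ j m * ξ j n
          + (if m = n then ξ n n else 0)
        = (if m + 1 = n then q / (1 - q) * abar n else 0)
          + (if m = n then q / (1 - q) * bbar n else 0)) :
    (∀ m n : ℕ, m + 2 ≤ n → ξ m n = 0) ∧
    (∀ n : ℕ, 1 ≤ n →
      ξ (n - 1) n * (1 - lam * ξ (n - 1) (n - 1)) = q / (1 - q) * abar n) ∧
    (∀ n : ℕ, 1 ≤ n →
      (1 - lam * ξ n n) ^ 2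
          + (q * κ * abar n) ^ 2 / (1 - lam * ξ (n - 1) (n - 1)) ^ 2
        = 1 - q * κ * bbar n) ∧
    (1 - lam * ξ 0 0) ^ 2 = 1 - q * κ * bbar 0 :=
  little_qLaguerre_master_equation_consequences_general q κ lam hq1 hlam ξ abar bbar hnz hmaster
end

section
/- Coefficient-comparison relations for the κ-deformation of little q-Laguerre type polynomials (proof of Theorem 3.2). Let 0 < q < 1, κ ≠ 0, λ = (1−q)·κ. For κ' ∈ {κ, qκ}, let p_n(·,κ') be real polynomial functions of degree exactly n (with p_{−1} ≡ 0), and let a_n(κ'), b_n(κ') be reals with a_0 = 0 satisfying the recurrence x·p_n(x,κ') = a_{n+1}(κ')·p_{n+1}(x,κ') + b_n(κ')·p_n(x,κ') + a_n(κ')·p_{n−1}(x,κ') for all x. Assume there are reals ξ_{nn}, ξ_{n−1,n} such that for all n and x: (p_n(x,κ) − p_n(x,qκ))/((1−q)·κ) = ξ_{nn}·p_n(x,κ) + ξ_{n−1,n}·p_{n−1}(x,κ). Write D_q f := (f(κ) − f(qκ))/((1−q)κ), ā_n := a_n(qκ), b̄_n := b_n(qκ). Then for all n ≥ 1: (a)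 D_q a_n = ξ_{n−1,n−1}·a_n(κ) − ξ_{nn}·ā_n; (b) D_q b_n = ξ_{nn}·(b_n(κ) − b̄_n) + ξ_{n−1,n}·a_n(κ) − ξ_{n,n+1}·ā_{n+1} (also valid for n = 0); (c) D_q a_n = ξ_{n−1,n}·(b_{n−1}(κ) − b̄_n) + ξ_{nn}·a_n(κ) − ξ_{n−1,n−1}·ā_n; (d) for n ≥ 2: ξ_{n−2,n−1}·ā_n = ξ_{n−1,n}·a_{n−1}(κ); and (e) if moreover 1 − λ·ξ_{nn} ≠ 0, then ā_n = ((1 − λ·ξ_{n−1,n−1})/(1 − λ·ξ_{nn}))·a_n(κ). -/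
/-!
Write `λ = (1 - q) κ`. The expansion of the q-derivative says that the polynomials at `q κ` are
obtained from those at `κ` by a lower bidiagonal change of basis,
`p_k(·, q κ) = (1 - λ ξ_{kk}) p_k(·, κ) - λ ξ_{k-1,k} p_{k-1}(·, κ)`.
Computing `x p_n(x, q κ)` once through the recurrence at `q κ` followed by this change of basis,
and once through the change of basis followed by the recurrence at `κ`, expresses the same
function as two combinations of `p_{n+1}, …, p_{n-2}` at `κ`. These have distinct degrees, hence
are linearly independent, and comparing the four coefficients gives the relations; dividing by
`λ` turns them into the stated formulas for the q-derivatives of `a_n` and `b_n`.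
-/

open Polynomial

theorem linearIndependent_of_eval_degree_eq {R : Type*} [CommRing R] [IsDomain R] [Infinite R]
    {f : ℕ → R → R} (hf : ∀ n : ℕ, ∃ Q : R[X], Q.degree = n ∧ ∀ x, f n x = Q.eval x) :
    LinearIndependent R f := by
  choose Q hQdeg hQ using hf
  have hinj : (LinearMap.pi (leval (R := R))).ker = ⊥ :=
    LinearMap.ker_eq_bot.mpr fun P P' h => Polynomial.funext (congr_fun h)
  have hfQ : f = LinearMap.pi leval ∘ Q := by
    ext n x
    simp [hQ]
  rw [hfQ]
  exact (Polynomial.Sequence.linearIndependent ⟨Q, hQdeg⟩).map' _ hinj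

/-- For `n ≤ 1` truncated subtraction makes some of the four vectors coincide, so the
coefficients of the repeated ones must be known to vanish beforehand. -/
theorem LinearIndependent.coeffs_eq_zero_of_four {R V : Type*} [Ring R] [AddCommGroup V]
    [Module R V] {v : ℕ → V} (hv : LinearIndependent R v) {n : ℕ} {c₀ c₁ c₂ c₃ : R}
    (h : c₀ • v (n + 1) + c₁ • v n + c₂ • v (n - 1) + c₃ • v (n - 2) = 0)
    (h₂ : n = 0 → c₂ = 0) (h₃ : n ≤ 1 → c₃ = 0) : c₀ = 0 ∧ c₁ = 0 ∧ c₂ = 0 ∧ c₃ = 0 := by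
  rcases n with _ | _ | m
  · obtain ⟨rfl, rfl⟩ := And.intro (h₂ rfl) (h₃ (by omega))
    have hinj : Function.Injective ![1, 0] := by
      intro k l hkl; fin_cases k <;> fin_cases l <;> simp_all
    have := Fintype.linearIndependent_iff.mp (hv.comp _ hinj) ![c₀, c₁]
      (by simpa [Fin.sum_univ_two] using h)
    exact ⟨this 0, this 1, rfl, rfl⟩
  · obtain rfl := h₃ le_rfl
    have hinj : Function.Injective ![2, 1, 0] := by
      intro k l hkl; fin_cases k <;> fin_cases l <;> simp_all
    have := Fintype.linearIndependent_iff.mp (hv.comp _ hinj) ![c₀, c₁, c₂]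
      (by simpa [Fin.sum_univ_three] using h)
    exact ⟨this 0, this 1, this 2, rfl⟩
  · have hinj : Function.Injective ![m + 3, m + 2, m + 1, m] := by
      intro k l hkl; fin_cases k <;> fin_cases l <;> simp_all
    have := Fintype.linearIndependent_iff.mp (hv.comp _ hinj) ![c₀, c₁, c₂, c₃]
      (by simpa [Fin.sum_univ_four, add_assoc] using h)
    exact ⟨this 0, this 1, this 2, this 3⟩

section ThreeTermRecurrence

variable {R V : Type*} [CommRing R] [AddCommGroup V] [Module R V]

/-- At `k = 0` the last term is `a 0 • v 0`; the convention `v (-1) = 0` is recovered by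
assuming `a 0 = 0`. -/
def ThreeTermRecurrence (X : V →ₗ[R] V) (v : ℕ → V) (a b : ℕ → R) : Prop :=
  ∀ k, X (v k) = a (k + 1) • v (k + 1) + b k • v k + a k • v (k - 1)

variable {X : V →ₗ[R] V} {v w : ℕ → V} {a b a' b' α β : ℕ → R}

theorem ThreeTermRecurrence.coeff_comparison (hv : ThreeTermRecurrence X v a b)
    (hw : ThreeTermRecurrence X w a' b') (hvw : ∀ k, w k = α k • v k - β k • v (k - 1))
    (hβ : β 0 = 0) (n : ℕ) :
    (α n * a (n + 1) - α (n + 1) * a' (n + 1)) • v (n + 1)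
      + (α n * b n - β n * a n + β (n + 1) * a' (n + 1) - α n * b' n) • v n
      + (α n * a n - β n * b (n - 1) + β n * b' n - α (n - 1) * a' n) • v (n - 1)
      + (β (n - 1) * a' n - β n * a (n - 1)) • v (n - 2) = 0 := by
  have hXw : X (w n) = α n • X (v n) - β n • X (v (n - 1)) := by
    rw [hvw, map_sub, map_smul, map_smul]
  have hXv : β n • X (v (n - 1))
      = β n • (a n • v n + b (n - 1) • v (n - 1) + a (n - 1) • v (n - 2)) := by
    rcases n with _ | k
    · simp [hβ]
    · simpa using congrArg (β (k + 1) • ·) (hv k)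
  have hw_succ : w (n + 1) = α (n + 1) • v (n + 1) - β (n + 1) • v n := hvw (n + 1)
  have hw_pred : w (n - 1) = α (n - 1) • v (n - 1) - β (n - 1) • v (n - 2) := by
    rw [hvw, Nat.sub_sub]
  linear_combination (norm := module) hw n - hXw - α n • hv n + hXv
    + a' (n + 1) • hw_succ + b' n • hvw n + a' n • hw_pred

theorem ThreeTermRecurrence.coeff_relations (hind : LinearIndependent R v)
    (hv : ThreeTermRecurrence X v a b) (hw : ThreeTermRecurrence X w a' b')
    (hvw : ∀ k, w k = α k • v k - β k • v (k - 1)) (hβ : β 0 = 0) (ha : a 0 = 0) (ha' : a' 0 = 0)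
    (n : ℕ) :
    α n * a (n + 1) - α (n + 1) * a' (n + 1) = 0
      ∧ α n * b n - β n * a n + β (n + 1) * a' (n + 1) - α n * b' n = 0
      ∧ α (n + 1) * a (n + 1) - β (n + 1) * b n + β (n + 1) * b' (n + 1) - α n * a' (n + 1) = 0
      ∧ β (n + 1) * a' (n + 2) - β (n + 2) * a (n + 1) = 0 := by
  have h m := hind.coeffs_eq_zero_of_four (hv.coeff_comparison hw hvw hβ m)
    (by rintro rfl; simp [ha, ha', hβ]) (by intro hm; interval_cases m <;> simp [ha, ha', hβ])
  exact ⟨(h n).1, (h n).2.1, (h (n + 1)).2.2.1, (h (n + 2)).2.2.2⟩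

end ThreeTermRecurrence

theorem eq_smul_sub_smul_of_div_sub_eq {K ι : Type*} [Field K] {lam : K} (hlam : lam ≠ 0)
    {f g : ℕ → ι → K} {ξ η : ℕ → K} (h₀ : ∀ x, (f 0 x - g 0 x) / lam = ξ 0 * f 0 x)
    (h : ∀ n, 1 ≤ n → ∀ x, (f n x - g n x) / lam = ξ n * f n x + η n * f (n - 1) x) (k : ℕ) :
    g k = (1 - lam * ξ k) • f k - (if k = 0 then 0 else lam * η k) • f (k - 1) := by
  ext x
  rcases k with _ | k
  · have hx := h₀ x
    rw [div_eq_iff hlam] at hx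
    simp only [Pi.sub_apply, Pi.smul_apply, smul_eq_mul, if_pos]
    linear_combination -hx
  · have hx := h (k + 1) (by omega) x
    rw [div_eq_iff hlam] at hx
    simp only [Pi.sub_apply, Pi.smul_apply, smul_eq_mul, if_neg (Nat.succ_ne_zero k)]
    linear_combination -hx

theorem little_qLaguerre_coefficient_comparison_general
    (q κ lam : ℝ) (hq1 : q < 1) (hκ : κ ≠ 0)
    (hlam : lam = (1 - q) * κ)
    (p : ℕ → ℝ → ℝ → ℝ) (a b : ℕ → ℝ → ℝ) (xid xio : ℕ → ℝ)
    (hdeg : ∀ κ' ∈ ({κ, q * κ} : Set ℝ), ∀ n : ℕ,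
      ∃ Q : Polynomial ℝ, Q.degree = n ∧ ∀ x : ℝ, p n x κ' = Q.eval x)
    (ha0 : ∀ κ' ∈ ({κ, q * κ} : Set ℝ), a 0 κ' = 0)
    (hrec : ∀ κ' ∈ ({κ, q * κ} : Set ℝ), ∀ n : ℕ, ∀ x : ℝ,
      x * p n x κ' = a (n + 1) κ' * p (n + 1) x κ' + b n κ' * p n x κ'
        + a n κ' * p (n - 1) x κ')
    (hexp0 : ∀ x : ℝ,
      (p 0 x κ - p 0 x (q * κ)) / ((1 - q) * κ) = xid 0 * p 0 x κ)
    (hexp : ∀ n : ℕ, 1 ≤ n → ∀ x : ℝ,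
      (p n x κ - p n x (q * κ)) / ((1 - q) * κ)
        = xid n * p n x κ + xio n * p (n - 1) x κ) :
    (∀ n : ℕ, 1 ≤ n →
      (a n κ - a n (q * κ)) / ((1 - q) * κ)
        = xid (n - 1) * a n κ - xid n * a n (q * κ)) ∧
    (∀ n : ℕ,
      (b n κ - b n (q * κ)) / ((1 - q) * κ)
        = xid n * (b n κ - b n (q * κ)) + xio n * a n κ
          - xio (n + 1) * a (n + 1) (q * κ)) ∧
    (∀ n : ℕ, 1 ≤ n →
      (a n κ - a n (q * κ)) / ((1 - q) * κ)
        = xio n * (b (n - 1) κ - b n (q * κ)) + xid n * a n κ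
          - xid (n - 1) * a n (q * κ)) ∧
    (∀ n : ℕ, 2 ≤ n → xio (n - 1) * a n (q * κ) = xio n * a (n - 1) κ) ∧
    (∀ n : ℕ, 1 ≤ n → 1 - lam * xid n ≠ 0 →
      a n (q * κ) = (1 - lam * xid (n - 1)) / (1 - lam * xid n) * a n κ) := by
  subst hlam
  have hlam_ne : (1 - q) * κ ≠ 0 := mul_ne_zero (by linarith) hκ
  have hκ_mem : κ ∈ ({κ, q * κ} : Set ℝ) := Set.mem_insert _ _
  have hqκ_mem : q * κ ∈ ({κ, q * κ} : Set ℝ) := Set.mem_insert_of_mem _ rfl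
  have hrec_fun : ∀ κ' ∈ ({κ, q * κ} : Set ℝ), ThreeTermRecurrence (LinearMap.mulLeft ℝ id)
      (fun n x => p n x κ') (fun n => a n κ') (fun n => b n κ') := by
    intro κ' hκ' n
    ext x
    simp [hrec κ' hκ' n x]
  have hshift := eq_smul_sub_smul_of_div_sub_eq (f := fun n x => p n x κ)
    (g := fun n x => p n x (q * κ)) hlam_ne hexp0 hexp
  have hrel := ThreeTermRecurrence.coeff_relations (α := fun k => 1 - (1 - q) * κ * xid k)
    (β := fun k => if k = 0 then 0 else (1 - q) * κ * xio k)
    (linearIndependent_of_eval_degree_eq (hdeg κ hκ_mem)) (hrec_fun κ hκ_mem)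
    (hrec_fun _ hqκ_mem) hshift (if_pos rfl) (ha0 κ hκ_mem) (ha0 _ hqκ_mem)
  simp only [Nat.add_eq_zero_iff, one_ne_zero, OfNat.ofNat_ne_zero, and_false, if_false] at hrel
  refine ⟨?_, ?_, ?_, ?_, ?_⟩
  · intro n hn
    obtain ⟨n, rfl⟩ : ∃ k, n = k + 1 := ⟨n - 1, by omega⟩
    rw [div_eq_iff hlam_ne, Nat.add_sub_cancel]
    linear_combination (hrel n).1
  · intro n
    have hβa : (if n = 0 then 0 else (1 - q) * κ * xio n) * a n κ
        = (1 - q) * κ * xio n * a n κ := by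
      rcases n with _ | n <;> simp [ha0 κ hκ_mem]
    rw [div_eq_iff hlam_ne]
    linear_combination (hrel n).2.1 + hβa
  · intro n hn
    obtain ⟨n, rfl⟩ : ∃ k, n = k + 1 := ⟨n - 1, by omega⟩
    rw [div_eq_iff hlam_ne, Nat.add_sub_cancel]
    linear_combination (hrel n).2.2.1
  · intro n hn
    obtain ⟨n, rfl⟩ : ∃ k, n = k + 2 := ⟨n - 2, by omega⟩
    rw [show n + 2 - 1 = n + 1 by omega]
    exact mul_left_cancel₀ hlam_ne (by linear_combination (hrel n).2.2.2)
  · intro n hn hden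
    obtain ⟨n, rfl⟩ : ∃ k, n = k + 1 := ⟨n - 1, by omega⟩
    rw [Nat.add_sub_cancel, div_mul_eq_mul_div, eq_div_iff hden]
    linear_combination -(hrel n).1

/-- Coefficient-comparison relations for the κ-deformation of little
q-Laguerre type polynomials (proof of Theorem 3.2).  Here `p n x κ'` are the
orthonormal polynomials at the two parameter values κ' ∈ {κ, qκ}, `a n κ'`,
`b n κ'` are their recurrence coefficients (`a 0 = 0`, `p₋₁ ≡ 0` by truncated
subtraction), `xid n = ξ_{nn}` and `xio n = ξ_{n−1,n}` are the Fourier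
coefficients of the q-derivative of `pₙ` with respect to κ, and
`D_q f = (f(κ) − f(qκ))/((1−q)κ)`. -/
theorem little_qLaguerre_coefficient_comparison
    (q κ lam : ℝ) (hq0 : 0 < q) (hq1 : q < 1) (hκ : κ ≠ 0)
    (hlam : lam = (1 - q) * κ)
    (p : ℕ → ℝ → ℝ → ℝ) (a b : ℕ → ℝ → ℝ) (xid xio : ℕ → ℝ)
    (hdeg : ∀ κ' ∈ ({κ, q * κ} : Set ℝ), ∀ n : ℕ,
      ∃ Q : Polynomial ℝ, Q.degree = n ∧ ∀ x : ℝ, p n x κ' = Q.eval x)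
    (ha0 : ∀ κ' ∈ ({κ, q * κ} : Set ℝ), a 0 κ' = 0)
    (hrec : ∀ κ' ∈ ({κ, q * κ} : Set ℝ), ∀ n : ℕ, ∀ x : ℝ,
      x * p n x κ' = a (n + 1) κ' * p (n + 1) x κ' + b n κ' * p n x κ'
        + a n κ' * p (n - 1) x κ')
    (hexp0 : ∀ x : ℝ,
      (p 0 x κ - p 0 x (q * κ)) / ((1 - q) * κ) = xid 0 * p 0 x κ)
    (hexp : ∀ n : ℕ, 1 ≤ n → ∀ x : ℝ,
      (p n x κ - p n x (q * κ)) / ((1 - q) * κ)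
        = xid n * p n x κ + xio n * p (n - 1) x κ) :
    (∀ n : ℕ, 1 ≤ n →
      (a n κ - a n (q * κ)) / ((1 - q) * κ)
        = xid (n - 1) * a n κ - xid n * a n (q * κ)) ∧
    (∀ n : ℕ,
      (b n κ - b n (q * κ)) / ((1 - q) * κ)
        = xid n * (b n κ - b n (q * κ)) + xio n * a n κ
          - xio (n + 1) * a (n + 1) (q * κ)) ∧
    (∀ n : ℕ, 1 ≤ n →
      (a n κ - a n (q * κ)) / ((1 - q) * κ)
        = xio n * (b (n - 1) κ - b n (q * κ)) + xid n * a n κ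
          - xid (n - 1) * a n (q * κ)) ∧
    (∀ n : ℕ, 2 ≤ n → xio (n - 1) * a n (q * κ) = xio n * a (n - 1) κ) ∧
    (∀ n : ℕ, 1 ≤ n → 1 - lam * xid n ≠ 0 →
      a n (q * κ) = (1 - lam * xid (n - 1)) / (1 - lam * xid n) * a n κ) :=
  little_qLaguerre_coefficient_comparison_general q κ lam hq1 hκ hlam p a b xid xio hdeg ha0 hrec
    hexp0 hexp
end

section
/- q-Toda equations for the recursive coefficients of the generalized little q-Laguerre ensemble (Theorem 3.2). Let 0 < q < 1, κ ≠ 0, λ = (1−q)·κ. For κ' ∈ {κ, qκ}, let p_n(·,κ') be real polynomial functions of degree exactly n (with p_{−1} ≡ 0), and a_n(κ'), b_n(κ') reals with a_0 = 0 satisfying x·p_n(x,κ') = a_{n+1}(κ')·p_{n+1}(x,κ') + b_n(κ')·p_n(x,κ') + a_n(κ')·p_{n−1}(x,κ') for all x. Assume reals ξ_{nn}, ξ_{n−1,n} satisfy, for all n and x: (p_n(x,κ) − p_n(x,qκ))/((1−q)·κ) = ξ_{nn}·p_n(x,κ) + ξ_{n−1,n}·p_{n−1}(x,κ); assume 1 −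 λ·ξ_{nn} ≠ 0 for all n; and assume the master-equation relation ξ_{n−1,n}·(1 − λ·ξ_{nn}) = (q/(1−q))·a_n(κ) for all n ≥ 1. Write D_q f := (f(κ) − f(qκ))/((1−q)κ). Then for all n ≥ 1: D_q a_n = ((ξ_{n−1,n−1} − ξ_{nn})/(1 − λ·ξ_{nn}))·a_n(κ), and for all n ≥ 0: D_q b_n = (q/(1−q))·[(a_n(κ)/(1 − λ·ξ_{nn}))² − (a_{n+1}(κ)/(1 − λ·ξ_{n+1,n+1}))²]. -/
/-!
Write `p'ₙ = pₙ(·, qκ)`, `sₙ = 1 − λξₙₙ`. The expansion hypotheses say that the change of basis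
from `(pₙ(·, κ))` to `(p'ₙ)` is lower bidiagonal, `p'ₙ = sₙ pₙ − tₙ pₙ₋₁` with `tₙ = λ ξₙ₋₁,ₙ`,
and the master equation turns this into `tₙ = λ q/(1−q) · aₙ/sₙ`. Computing `x p'ₙ(x)` once by
the recurrence at `qκ` and once by the recurrence at `κ`, and comparing the coefficients of
`pₙ₊₁` and `pₙ` (possible because `pⱼ` has degree exactly `j`), gives
`sₙ aₙ₊₁ = a'ₙ₊₁ sₙ₊₁` and `sₙ (bₙ − b'ₙ) = tₙ aₙ − tₙ₊₁ a'ₙ₊₁`: the conjugation of the Jacobi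
matrix by a bidiagonal matrix. The q-Toda equations are these two identities solved for the
q-differences.
-/

open Polynomial

theorem Polynomial.top_coeffs_eq_zero_of_eval_eq_zero {R : Type*} [CommRing R] [IsDomain R]
    [Infinite R] {n : ℕ} {P Q S : R[X]} (hP : P.degree = ↑(n + 1)) (hQ : Q.degree = n)
    (hS : S.degree < n) {c d : R} (h : ∀ x, c * P.eval x + d * Q.eval x + S.eval x = 0) :
    c = 0 ∧ d = 0 := by
  have hsum : C c * P + C d * Q + S = 0 := Polynomial.funext fun x => by simpa using h x
  have hn : (n : WithBot ℕ) < ↑(n + 1) := by exact_mod_cast n.lt_succ_self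
  have hc : c = 0 := by
    have := congrArg (coeff · (n + 1)) hsum
    simp only [coeff_add, coeff_C_mul, coeff_zero, coeff_eq_zero_of_degree_lt (hQ ▸ hn),
      coeff_eq_zero_of_degree_lt (hS.trans hn), mul_zero, add_zero] at this
    exact (mul_eq_zero.mp this).resolve_right (coeff_ne_zero_of_eq_degree hP)
  refine ⟨hc, ?_⟩
  have := congrArg (coeff · n) hsum
  simp only [hc, coeff_add, coeff_C_mul, coeff_zero, coeff_eq_zero_of_degree_lt hS, zero_mul,
    zero_add, add_zero] at this
  exact (mul_eq_zero.mp this).resolve_right (coeff_ne_zero_of_eq_degree hQ)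

/-- At `n = 0` the term `a n * P (n - 1) x` is `a 0 * P 0 x` (truncated subtraction), which
vanishes because `a 0 = 0`. -/
structure IsThreeTermRecurrence {R : Type*} [CommRing R] (P : ℕ → R → R) (a b : ℕ → R) :
    Prop where
  a_zero : a 0 = 0
  x_mul : ∀ n x, x * P n x = a (n + 1) * P (n + 1) x + b n * P n x + a n * P (n - 1) x

namespace IsThreeTermRecurrence

theorem connection {R : Type*} [CommRing R] [IsDomain R] [Infinite R] {P P' : ℕ → R → R}
    {a b a' b' s t : ℕ → R} (hP : IsThreeTermRecurrence P a b)
    (hP' : IsThreeTermRecurrence P' a' b')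
    (hdeg : ∀ n : ℕ, ∃ Q : R[X], Q.degree = n ∧ ∀ x, P n x = Q.eval x)
    (hcon : ∀ n x, P' n x = s n * P n x - t n * P (n - 1) x) (ht : t 0 = 0) (n : ℕ) :
    s n * a (n + 1) = a' (n + 1) * s (n + 1) ∧
      s n * (b n - b' n) = t n * a n - t (n + 1) * a' (n + 1) := by
  choose Q hQdeg hQ using hdeg
  rw [← sub_eq_zero, ← sub_eq_zero (a := s n * (b n - b' n))]
  cases n with
  | zero =>
    refine top_coeffs_eq_zero_of_eval_eq_zero (hQdeg 1) (hQdeg 0) (S := 0) (by simp) fun x => ?_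
    have r := hP.x_mul 0 x
    have r' := hP'.x_mul 0 x
    have e0 := hcon 0 x
    have e1 := hcon 1 x
    simp only [Nat.zero_sub, zero_add, hP.a_zero, hP'.a_zero, ht, eval_zero, add_zero, ← hQ]
      at r r' e0 e1 ⊢
    linear_combination -s 0 * r + r' + (b' 0 - x) * e0 + a' 1 * e1
  | succ m =>
    refine top_coeffs_eq_zero_of_eval_eq_zero (hQdeg (m + 1 + 1)) (hQdeg (m + 1))
      (S := (s (m + 1) * a (m + 1) - t (m + 1) * b m + t (m + 1) * b' (m + 1)
          - a' (m + 1) * s m) • Q m + (a' (m + 1) * t m - t (m + 1) * a m) • Q (m - 1))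
      ?_ fun x => ?_
    · rw [← mem_degreeLT]
      refine add_mem (Submodule.smul_mem _ _ ?_) (Submodule.smul_mem _ _ ?_) <;>
        rw [mem_degreeLT, hQdeg] <;> norm_cast <;> omega
    have r := hP.x_mul (m + 1) x
    have rm := hP.x_mul m x
    have r' := hP'.x_mul (m + 1) x
    have e2 := hcon (m + 1 + 1) x
    have e1 := hcon (m + 1) x
    have e0 := hcon m x
    simp only [Nat.add_sub_cancel, eval_add, eval_smul, smul_eq_mul, ← hQ] at r rm r' e2 e1 e0 ⊢
    linear_combination -s (m + 1) * r + t (m + 1) * rm + r' + (b' (m + 1) - x) * e1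
      + a' (m + 1 + 1) * e2 + a' (m + 1) * e0

theorem toda {K : Type*} [Field K] [Infinite K] {P P' : ℕ → K → K} {a b a' b' ξ : ℕ → K}
    {lam c : K} (hP : IsThreeTermRecurrence P a b) (hP' : IsThreeTermRecurrence P' a' b')
    (hdeg : ∀ n : ℕ, ∃ Q : K[X], Q.degree = n ∧ ∀ x, P n x = Q.eval x)
    (hL : lam ≠ 0) (hs : ∀ n, 1 - lam * ξ n ≠ 0)
    (hcon : ∀ n x, P' n x =
      (1 - lam * ξ n) * P n x - lam * c * a n / (1 - lam * ξ n) * P (n - 1) x) :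
    (∀ n, (a (n + 1) - a' (n + 1)) / lam
        = (ξ n - ξ (n + 1)) / (1 - lam * ξ (n + 1)) * a (n + 1)) ∧
      ∀ n, (b n - b' n) / lam
        = c * ((a n / (1 - lam * ξ n)) ^ 2 - (a (n + 1) / (1 - lam * ξ (n + 1))) ^ 2) := by
  have hconn := hP.connection hP' hdeg hcon (by simp [hP.a_zero])
  refine ⟨fun n => ?_, fun n => ?_⟩
  · have := hs (n + 1)
    field_simp
    linear_combination (hconn n).1
  · obtain ⟨ha, hb⟩ := hconn n
    have := hs n
    have := hs (n + 1)
    field_simp at hb ⊢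
    linear_combination (1 - lam * ξ (n + 1)) * hb + lam * c * (1 - lam * ξ n) * a (n + 1) * ha

end IsThreeTermRecurrence

/-- Here `xid n = ξₙₙ`, `xio n = ξₙ₋₁,ₙ` and `lam = λ`. -/
theorem little_qLaguerre_qToda_general
    (q κ lam : ℝ) (hq1 : q < 1) (hκ : κ ≠ 0)
    (hlam : lam = (1 - q) * κ)
    (p : ℕ → ℝ → ℝ → ℝ) (a b : ℕ → ℝ → ℝ) (xid xio : ℕ → ℝ)
    (hdeg : ∀ κ' ∈ ({κ, q * κ} : Set ℝ), ∀ n : ℕ,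
      ∃ Q : Polynomial ℝ, Q.degree = n ∧ ∀ x : ℝ, p n x κ' = Q.eval x)
    (ha0 : ∀ κ' ∈ ({κ, q * κ} : Set ℝ), a 0 κ' = 0)
    (hrec : ∀ κ' ∈ ({κ, q * κ} : Set ℝ), ∀ n : ℕ, ∀ x : ℝ,
      x * p n x κ' = a (n + 1) κ' * p (n + 1) x κ' + b n κ' * p n x κ'
        + a n κ' * p (n - 1) x κ')
    (hexp0 : ∀ x : ℝ,
      (p 0 x κ - p 0 x (q * κ)) / ((1 - q) * κ) = xid 0 * p 0 x κ)
    (hexp : ∀ n : ℕ, 1 ≤ n → ∀ x : ℝ,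
      (p n x κ - p n x (q * κ)) / ((1 - q) * κ)
        = xid n * p n x κ + xio n * p (n - 1) x κ)
    (hnz : ∀ n : ℕ, 1 - lam * xid n ≠ 0)
    (hmaster : ∀ n : ℕ, 1 ≤ n →
      xio n * (1 - lam * xid n) = q / (1 - q) * a n κ) :
    (∀ n : ℕ, 1 ≤ n →
      (a n κ - a n (q * κ)) / ((1 - q) * κ)
        = (xid (n - 1) - xid n) / (1 - lam * xid n) * a n κ) ∧
    (∀ n : ℕ,
      (b n κ - b n (q * κ)) / ((1 - q) * κ)
        = q / (1 - q) * ((a n κ / (1 - lam * xid n)) ^ 2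
            - (a (n + 1) κ / (1 - lam * xid (n + 1))) ^ 2)) := by
  simp only [← hlam] at hexp0 hexp ⊢
  have hL : lam ≠ 0 := hlam ▸ mul_ne_zero (sub_ne_zero.2 hq1.ne') hκ
  have hκK : κ ∈ ({κ, q * κ} : Set ℝ) := Set.mem_insert _ _
  have hqκK : q * κ ∈ ({κ, q * κ} : Set ℝ) := Set.mem_insert_of_mem _ rfl
  have hcon : ∀ n x, p n x (q * κ) = (1 - lam * xid n) * p n x κ
      - lam * (q / (1 - q)) * a n κ / (1 - lam * xid n) * p (n - 1) x κ := by
    rintro (_ | n) x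
    · have h := hexp0 x
      rw [div_eq_iff hL] at h
      simp only [ha0 κ hκK]
      linear_combination -h
    · have h := hexp (n + 1) n.succ_pos x
      rw [div_eq_iff hL] at h
      rw [mul_assoc, ← hmaster (n + 1) n.succ_pos, ← mul_assoc, mul_div_cancel_right₀ _ (hnz _)]
      linear_combination -h
  obtain ⟨hA, hB⟩ := IsThreeTermRecurrence.toda (a := (a · κ)) (b := (b · κ))
    (a' := (a · (q * κ))) (b' := (b · (q * κ))) ⟨ha0 κ hκK, hrec κ hκK⟩
    ⟨ha0 _ hqκK, hrec _ hqκK⟩ (hdeg κ hκK) hL hnz hcon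
  refine ⟨fun n hn => ?_, hB⟩
  obtain ⟨m, rfl⟩ := Nat.exists_eq_add_of_le' hn
  exact hA m

/-- Theorem 3.2: the q-Toda equations for the recurrence coefficients
`a n κ`, `b n κ` of the generalized little q-Laguerre orthonormal polynomials
`p n · κ'` (κ' ∈ {κ, qκ}).  Here `xid n = ξ_{nn}` and `xio n = ξ_{n−1,n}` are
the Fourier coefficients of the q-derivative of `pₙ` with respect to κ,
`λ = (1−q)·κ`, `hmaster` is the master-equation relation
`ξ_{n−1,n}(1 − λξ_{nn}) = (q/(1−q))·aₙ(κ)`, and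
`D_q f = (f(κ) − f(qκ))/((1−q)κ)`. -/
theorem little_qLaguerre_qToda
    (q κ lam : ℝ) (hq0 : 0 < q) (hq1 : q < 1) (hκ : κ ≠ 0)
    (hlam : lam = (1 - q) * κ)
    (p : ℕ → ℝ → ℝ → ℝ) (a b : ℕ → ℝ → ℝ) (xid xio : ℕ → ℝ)
    (hdeg : ∀ κ' ∈ ({κ, q * κ} : Set ℝ), ∀ n : ℕ,
      ∃ Q : Polynomial ℝ, Q.degree = n ∧ ∀ x : ℝ, p n x κ' = Q.eval x)
    (ha0 : ∀ κ' ∈ ({κ, q * κ} : Set ℝ), a 0 κ' = 0)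
    (hrec : ∀ κ' ∈ ({κ, q * κ} : Set ℝ), ∀ n : ℕ, ∀ x : ℝ,
      x * p n x κ' = a (n + 1) κ' * p (n + 1) x κ' + b n κ' * p n x κ'
        + a n κ' * p (n - 1) x κ')
    (hexp0 : ∀ x : ℝ,
      (p 0 x κ - p 0 x (q * κ)) / ((1 - q) * κ) = xid 0 * p 0 x κ)
    (hexp : ∀ n : ℕ, 1 ≤ n → ∀ x : ℝ,
      (p n x κ - p n x (q * κ)) / ((1 - q) * κ)
        = xid n * p n x κ + xio n * p (n - 1) x κ)
    (hnz : ∀ n : ℕ, 1 - lam * xid n ≠ 0)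
    (hmaster : ∀ n : ℕ, 1 ≤ n →
      xio n * (1 - lam * xid n) = q / (1 - q) * a n κ) :
    (∀ n : ℕ, 1 ≤ n →
      (a n κ - a n (q * κ)) / ((1 - q) * κ)
        = (xid (n - 1) - xid n) / (1 - lam * xid n) * a n κ) ∧
    (∀ n : ℕ,
      (b n κ - b n (q * κ)) / ((1 - q) * κ)
        = q / (1 - q) * ((a n κ / (1 - lam * xid n)) ^ 2
            - (a (n + 1) κ / (1 - lam * xid (n + 1))) ^ 2)) :=
  little_qLaguerre_qToda_general q κ lam hq1 hκ hlam p a b xid xio hdeg ha0 hrec hexp0 hexp hnz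
    hmaster
end

section
/- Consequences of the master equation for the Fourier coefficients of the κ-deformed generalized q-Hermite polynomials (Theorem 3.4). Let 0 < q < 1, κ ≠ 0, λ = (1−q)·κ. Let Ξ : ℕ × ℕ → ℝ (with Ξ_{mn} defined for m ≤ n) and Ā : ℕ → ℝ be reals such that 1 − λ·Ξ_{mm} ≠ 0 for all m, Ξ_{mn} = 0 whenever n − m is odd (parity), and assume the master equation: for all m ≤ n, δ_{mn}·Ξ_{nn} + (1 − λ·Ξ_{mm})·Ξ_{mn} − λ·Σ_{j=0}^{m−1} Ξ_{jm}·Ξ_{jn} + δ_{mn}·(q²κ/(q−1))·(Ā_{n+1}² + Ā_n²) + δ_{m,n−2}·(q²κ/(q−1))·Ā_{n−1}·Ā_n = 0. Then: (i) Ξ_{mn} = 0 whenever m + 3 ≤ n; (ii) for all n ≥ 2: Ξ_{n−2,n}·(1 − λ·Ξ_{n−2,n−2}) = (q²κ/(1−q))·Ā_n·Ā_{n−1}; (iii) for all n ≥ 2: (1 − λ·Ξ_{nn})² + ((qκ)²·Ā_n·Ā_{n−1}/(1 − λ·Ξ_{n−2,n−2}))² = 1 − (qκ)²·(Ā_{n+1}²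 + Ā_n²). -/
/-!
Read row by row, the master equation expresses `(1 - λ Ξ_mm) Ξ_mn` through the entries
`Ξ_jm Ξ_jn` of the earlier rows `j < m`. Off the band `n ≤ m + 2` the inhomogeneous terms
vanish, so strong induction on `m` kills every entry with `m + 3 ≤ n`. The row `(n - 2, n)`
is then (ii). In the diagonal row `(n, n)` the sum collapses to `Ξ_{n-2,n}²`, because
`Ξ_{n-1,n}` vanishes by parity, and completing the square `Ξ_nn (2 - λ Ξ_nn) = 1 - (1 - λ Ξ_nn)²`
gives (iii), with `λ Ξ_{n-2,n}` rewritten through (ii).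
-/

/-- The master equation with the constant `q²κ/(q - 1)` replaced by an arbitrary `c`. -/
def MasterEquation (lam c : ℝ) (Xi : ℕ → ℕ → ℝ) (A : ℕ → ℝ) : Prop :=
  ∀ m n : ℕ, m ≤ n →
    (if m = n then Xi n n else 0) + (1 - lam * Xi m m) * Xi m n
        - lam * ∑ j ∈ Finset.range m, Xi j m * Xi j n
        + (if m = n then c * (A (n + 1) ^ 2 + A n ^ 2) else 0)
        + (if m + 2 = n then c * (A (n - 1) * A n) else 0)
      = 0

namespace MasterEquation

variable {lam c : ℝ} {Xi : ℕ → ℕ → ℝ} {A : ℕ → ℝ}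

theorem eq_zero_of_add_three_le (h : MasterEquation lam c Xi A)
    (hnz : ∀ m, 1 - lam * Xi m m ≠ 0) : ∀ m n, m + 3 ≤ n → Xi m n = 0 := by
  intro m
  induction m using Nat.strong_induction_on with
  | _ m ih =>
    intro n hmn
    have hsum : ∑ j ∈ Finset.range m, Xi j m * Xi j n = 0 :=
      Finset.sum_eq_zero fun j hj => by
        have hjm := Finset.mem_range.mp hj
        rw [ih j hjm n (by omega), mul_zero]
    have hrow := h m n (by omega)
    rw [if_neg (by omega), if_neg (by omega), if_neg (by omega), hsum] at hrow
    exact (mul_eq_zero.mp (by linear_combination hrow)).resolve_left (hnz m)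

theorem superdiag_two_mul (h : MasterEquation lam c Xi A)
    (hnz : ∀ m, 1 - lam * Xi m m ≠ 0) (m : ℕ) :
    Xi m (m + 2) * (1 - lam * Xi m m) = -c * (A (m + 1) * A (m + 2)) := by
  have hsum : ∑ j ∈ Finset.range m, Xi j m * Xi j (m + 2) = 0 :=
    Finset.sum_eq_zero fun j hj => by
      have := Finset.mem_range.mp hj
      rw [h.eq_zero_of_add_three_le hnz j (m + 2) (by omega), mul_zero]
  have hrow := h m (m + 2) (by omega)
  rw [if_neg (by omega), if_neg (by omega), if_pos rfl, hsum,
    show m + 2 - 1 = m + 1 by omega] at hrow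
  linear_combination hrow

theorem sum_range_sq_eq (h : MasterEquation lam c Xi A)
    (hnz : ∀ m, 1 - lam * Xi m m ≠ 0)
    (hparity : ∀ m n : ℕ, m ≤ n → Odd (n - m) → Xi m n = 0) (m : ℕ) :
    ∑ j ∈ Finset.range (m + 2), Xi j (m + 2) * Xi j (m + 2)
      = Xi m (m + 2) * Xi m (m + 2) := by
  refine Finset.sum_eq_single_of_mem m (by simp) fun j hj hne => ?_
  obtain hlt | rfl : j < m ∨ j = m + 1 := by
    have := Finset.mem_range.mp hj
    omega
  · rw [h.eq_zero_of_add_three_le hnz j _ (by omega), mul_zero]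
  · rw [hparity (m + 1) (m + 2) (by omega) (by simp), mul_zero]

theorem diag_mul_two_sub (h : MasterEquation lam c Xi A)
    (hnz : ∀ m, 1 - lam * Xi m m ≠ 0)
    (hparity : ∀ m n : ℕ, m ≤ n → Odd (n - m) → Xi m n = 0) (m : ℕ) :
    Xi (m + 2) (m + 2) * (2 - lam * Xi (m + 2) (m + 2))
      = lam * Xi m (m + 2) ^ 2 - c * (A (m + 3) ^ 2 + A (m + 2) ^ 2) := by
  have hrow := h (m + 2) (m + 2) le_rfl
  rw [if_pos rfl, if_pos rfl, if_neg (by omega), h.sum_range_sq_eq hnz hparity m] at hrow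
  linear_combination hrow

theorem one_sub_sq_add_sq (h : MasterEquation lam c Xi A)
    (hnz : ∀ m, 1 - lam * Xi m m ≠ 0)
    (hparity : ∀ m n : ℕ, m ≤ n → Odd (n - m) → Xi m n = 0) (m : ℕ) :
    (1 - lam * Xi (m + 2) (m + 2)) ^ 2
        + (-(lam * c) * A (m + 2) * A (m + 1) / (1 - lam * Xi m m)) ^ 2
      = 1 - -(lam * c) * (A (m + 3) ^ 2 + A (m + 2) ^ 2) := by
  have hoff : -(lam * c) * A (m + 2) * A (m + 1) / (1 - lam * Xi m m)
      = lam * Xi m (m + 2) := by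
    rw [div_eq_iff (hnz m)]
    linear_combination (-lam) * h.superdiag_two_mul hnz m
  rw [hoff]
  linear_combination (-lam) * h.diag_mul_two_sub hnz hparity m

end MasterEquation

theorem qHermite_master_equation_consequences_general
    (q κ lam : ℝ) (hq1 : q < 1)
    (hlam : lam = (1 - q) * κ)
    (Xi : ℕ → ℕ → ℝ) (Abar : ℕ → ℝ)
    (hnz : ∀ m : ℕ, 1 - lam * Xi m m ≠ 0)
    (hparity : ∀ m n : ℕ, m ≤ n → Odd (n - m) → Xi m n = 0)
    (hmaster : ∀ m n : ℕ, m ≤ n →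
      (if m = n then Xi n n else 0) + (1 - lam * Xi m m) * Xi m n
          - lam * ∑ j ∈ Finset.range m, Xi j m * Xi j n
          + (if m = n then q ^ 2 * κ / (q - 1) * (Abar (n + 1) ^ 2 + Abar n ^ 2) else 0)
          + (if m + 2 = n then q ^ 2 * κ / (q - 1) * (Abar (n - 1) * Abar n) else 0)
        = 0) :
    (∀ m n : ℕ, m + 3 ≤ n → Xi m n = 0) ∧
    (∀ n : ℕ, 2 ≤ n →
      Xi (n - 2) n * (1 - lam * Xi (n - 2) (n - 2))
        = q ^ 2 * κ / (1 - q) * (Abar n * Abar (n - 1))) ∧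
    (∀ n : ℕ, 2 ≤ n →
      (1 - lam * Xi n n) ^ 2
          + ((q * κ) ^ 2 * Abar n * Abar (n - 1) / (1 - lam * Xi (n - 2) (n - 2))) ^ 2
        = 1 - (q * κ) ^ 2 * (Abar (n + 1) ^ 2 + Abar n ^ 2)) := by
  have hme : MasterEquation lam (q ^ 2 * κ / (q - 1)) Xi Abar := hmaster
  have hlc : -(lam * (q ^ 2 * κ / (q - 1))) = (q * κ) ^ 2 := by
    have : q - 1 ≠ 0 := by linarith
    rw [hlam]
    field_simp
    ring
  refine ⟨hme.eq_zero_of_add_three_le hnz, fun n hn => ?_, fun n hn => ?_⟩ <;>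
    obtain ⟨m, rfl⟩ := Nat.exists_eq_add_of_le' hn <;>
    rw [Nat.add_sub_cancel, show m + 2 - 1 = m + 1 by omega]
  · rw [hme.superdiag_two_mul hnz m, show (1 : ℝ) - q = -(q - 1) by ring, div_neg]
    ring
  · simpa only [hlc] using hme.one_sub_sq_add_sq hnz hparity m

/-- Theorem 3.4: consequences of the master equation for the Fourier
coefficients `Xi m n = Ξ_{mn}` of the κ-deformation (q-derivative) of the
generalized q-Hermite orthonormal polynomials, where `Abar n = Aₙ(qκ)` are
the rescaled recurrence coefficients, `λ = (1−q)·κ`, and `Ξ_{mn} = 0`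
whenever `n − m` is odd (parity of the weight). -/
theorem qHermite_master_equation_consequences
    (q κ lam : ℝ) (hq0 : 0 < q) (hq1 : q < 1) (hκ : κ ≠ 0)
    (hlam : lam = (1 - q) * κ)
    (Xi : ℕ → ℕ → ℝ) (Abar : ℕ → ℝ)
    (hnz : ∀ m : ℕ, 1 - lam * Xi m m ≠ 0)
    (hparity : ∀ m n : ℕ, m ≤ n → Odd (n - m) → Xi m n = 0)
    (hmaster : ∀ m n : ℕ, m ≤ n →
      (if m = n then Xi n n else 0) + (1 - lam * Xi m m) * Xi m n
          - lam * ∑ j ∈ Finset.range m, Xi j m * Xi j n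
          + (if m = n then q ^ 2 * κ / (q - 1) * (Abar (n + 1) ^ 2 + Abar n ^ 2) else 0)
          + (if m + 2 = n then q ^ 2 * κ / (q - 1) * (Abar (n - 1) * Abar n) else 0)
        = 0) :
    (∀ m n : ℕ, m + 3 ≤ n → Xi m n = 0) ∧
    (∀ n : ℕ, 2 ≤ n →
      Xi (n - 2) n * (1 - lam * Xi (n - 2) (n - 2))
        = q ^ 2 * κ / (1 - q) * (Abar n * Abar (n - 1))) ∧
    (∀ n : ℕ, 2 ≤ n →
      (1 - lam * Xi n n) ^ 2
          + ((q * κ) ^ 2 * Abar n * Abar (n - 1) / (1 - lam * Xi (n - 2) (n - 2))) ^ 2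
        = 1 - (q * κ) ^ 2 * (Abar (n + 1) ^ 2 + Abar n ^ 2)) :=
  qHermite_master_equation_consequences_general q κ lam hq1 hlam Xi Abar hnz hparity hmaster
end

section
/- Quadratic relations between the Fourier coefficients of the κ-deformed q-Laguerre and q-Hermite polynomial systems (Theorem 3.6). Let 0 < q < 1 and κ ≠ 0. Let p_n(·;·), p̃_n(·;·), P_n(·;·) be families of real functions such that p_n(·;κ²) and p̃_n(·;κ²) are polynomial functions of degree exactly n. Assume: (i) for κ' ∈ {κ, qκ} and all x: P_{2n}(x;κ') = √((1+q)/2)·p_n(x²;κ'²) and P_{2n+1}(x;κ') = √((1+q)/2)·x·p̃_n(x²;κ'²); (ii) there are reals ξ_{nn}, ξ_{n−1,n}, ξ̃_{nn}, ξ̃_{n−1,n} with, for all y: (p_n(y;κ²) − p_n(y;q²κ²))/((1−q²)·κ²) = ξ_{nn}·p_n(y;κ²) + ξ_{n−1,n}·p_{n−1}(y;κ²) and (p̃_n(y;κ²) − p̃_n(y;q²κ²))/((1−q²)·κ²) = ξ̃_{nn}·p̃_n(y;κ²) + ξ̃_{n−1,n}·p̃_{n−1}(y;κ²); (iii) there are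 reals Ξ_{nn}, Ξ_{n−2,n} with, for all x: (P_n(x;κ) − P_n(x;qκ))/((1−q)·κ) = Ξ_{nn}·P_n(x;κ) + Ξ_{n−2,n}·P_{n−2}(x;κ). Then for all n: Ξ_{2n,2n} = (1+q)·κ·ξ_{nn}, Ξ_{2n−2,2n} = (1+q)·κ·ξ_{n−1,n}, Ξ_{2n+1,2n+1} = (1+q)·κ·ξ̃_{nn}, and Ξ_{2n−1,2n+1} = (1+q)·κ·ξ̃_{n−1,n}. -/
/-!
Both q-derivatives only see the deformation parameter at `κ` and `qκ`, and there the q-Hermite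
functions are `w(x) · pₙ(x²; κ'²)` with `w(x) = √((1+q)/2)` or `√((1+q)/2) · x`. Since
`D_q^κ [g(κ²)] = (1+q) κ (D_{q²} g)(κ²)`, the two Fourier expansions give
`w(x) · ((Ξ - (1+q)κ ξ) pₙ(x²) + (Ξ' - (1+q)κ ξ') pₙ₋₁(x²)) = 0` for every `x > 0`. As `pₙ` and
`pₙ₋₁` are polynomials of different degrees, they are linearly independent on `(0, ∞)`, so both
coefficients vanish.
-/

open Polynomial

namespace Polynomial

variable {R : Type*} [CommRing R] [IsDomain R] {p r : R[X]} {s : Set R} {a b : R}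

theorem eq_zero_of_forall_mul_eval_eq_zero (hp : p ≠ 0) (hs : s.Infinite)
    (h : ∀ y ∈ s, a * p.eval y = 0) : a = 0 := by
  have hCp : C a * p = 0 :=
    eq_zero_of_infinite_isRoot _ (hs.mono fun y hy => by simpa using h y hy)
  exact C_eq_zero.mp ((mul_eq_zero.mp hCp).resolve_right hp)

theorem eq_zero_of_forall_mul_eval_add_mul_eval_eq_zero (hrp : r.degree < p.degree) (hr : r ≠ 0)
    (hs : s.Infinite) (h : ∀ y ∈ s, a * p.eval y + b * r.eval y = 0) : a = 0 ∧ b = 0 := by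
  have hsum : C a * p + C b * r = 0 :=
    eq_zero_of_infinite_isRoot _ (hs.mono fun y hy => by simpa using h y hy)
  have hp : p ≠ 0 := ne_zero_of_degree_gt hrp
  have hr_top : r.coeff p.natDegree = 0 :=
    coeff_eq_zero_of_degree_lt (by rwa [← degree_eq_natDegree hp])
  have ha : a = 0 := by
    have := congrArg (coeff · p.natDegree) hsum
    simp only [coeff_add, coeff_C_mul, hr_top, mul_zero, add_zero, coeff_zero] at this
    exact (mul_eq_zero.mp this).resolve_right (leadingCoeff_ne_zero.mpr hp)
  subst ha
  exact ⟨rfl, eq_zero_of_forall_mul_eval_eq_zero hr hs fun y hy => by simpa using h y hy⟩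

end Polynomial

section qDiff

variable {K : Type*} [Field K]

/-- The Jackson q-derivative. -/
noncomputable def qDiff (q : K) (f : K → K) (κ : K) : K :=
  (f κ - f (q * κ)) / ((1 - q) * κ)

theorem qDiff_comp_sq {q : K} (hq : 1 + q ≠ 0) (g : K → K) (κ : K) :
    qDiff q (fun k => g (k ^ 2)) κ = (1 + q) * κ * qDiff (q ^ 2) g (κ ^ 2) := by
  unfold qDiff
  rcases eq_or_ne κ 0 with rfl | hκ
  · simp
  rcases eq_or_ne (1 - q) 0 with hq1 | hq1
  · simp [show q = 1 by linear_combination -hq1]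
  have hq2 : 1 - q ^ 2 ≠ 0 := by
    rw [show 1 - q ^ 2 = (1 - q) * (1 + q) by ring]; exact mul_ne_zero hq1 hq
  field_simp
  ring

theorem qDiff_coeff_combination_eq_zero {q κ w A B a b : K} {f f' g g' : K → K}
    (hq : 1 + q ≠ 0) (hw : w ≠ 0) (hf : f κ = w * g (κ ^ 2))
    (hfq : f (q * κ) = w * g ((q * κ) ^ 2)) (hf' : f' κ = w * g' (κ ^ 2))
    (hA : qDiff q f κ = A * f κ + B * f' κ)
    (ha : qDiff (q ^ 2) g (κ ^ 2) = a * g (κ ^ 2) + b * g' (κ ^ 2)) :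
    (A - (1 + q) * κ * a) * g (κ ^ 2) + (B - (1 + q) * κ * b) * g' (κ ^ 2) = 0 := by
  have hfg : qDiff q f κ = w * qDiff q (fun k => g (k ^ 2)) κ := by
    simp only [qDiff, hf, hfq]; ring
  rw [qDiff_comp_sq hq, ha, hA, hf, hf'] at hfg
  have : w * ((A - (1 + q) * κ * a) * g (κ ^ 2) + (B - (1 + q) * κ * b) * g' (κ ^ 2)) = 0 := by
    linear_combination hfg
  exact (mul_eq_zero.mp this).resolve_left hw

end qDiff

theorem qDiff_coeffs_eq_of_eq_mul_comp_sq {q κ : ℝ} (hq : 1 + q ≠ 0)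
    (L H : ℕ → ℝ → ℝ → ℝ) (w : ℝ → ℝ) (hw : ∀ x, 0 < x → w x ≠ 0)
    (hdeg : ∀ n : ℕ, ∃ Q : ℝ[X], Q.degree = n ∧ ∀ y, L n y (κ ^ 2) = Q.eval y)
    (hHκ : ∀ n x, H n x κ = w x * L n (x ^ 2) (κ ^ 2))
    (hHqκ : ∀ n x, H n x (q * κ) = w x * L n (x ^ 2) ((q * κ) ^ 2))
    (a b A B : ℕ → ℝ)
    (hL0 : ∀ y, qDiff (q ^ 2) (L 0 y) (κ ^ 2) = a 0 * L 0 y (κ ^ 2))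
    (hL : ∀ n, 1 ≤ n → ∀ y,
      qDiff (q ^ 2) (L n y) (κ ^ 2) = a n * L n y (κ ^ 2) + b n * L (n - 1) y (κ ^ 2))
    (hH0 : ∀ x, qDiff q (H 0 x) κ = A 0 * H 0 x κ)
    (hH : ∀ n, 1 ≤ n → ∀ x,
      qDiff q (H n x) κ = A n * H n x κ + B n * H (n - 1) x κ) :
    (∀ n, A n = (1 + q) * κ * a n) ∧ (∀ n, 1 ≤ n → B n = (1 + q) * κ * b n) := by
  have hpos : (Set.Ioi (0 : ℝ)).Infinite := Set.Ioi_infinite 0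
  have hsq : ∀ y : ℝ, 0 < y → Real.sqrt y ^ 2 = y ∧ w (Real.sqrt y) ≠ 0 := fun y hy =>
    ⟨Real.sq_sqrt hy.le, hw _ (Real.sqrt_pos.mpr hy)⟩
  have hcoeffs : ∀ n, 1 ≤ n → A n = (1 + q) * κ * a n ∧ B n = (1 + q) * κ * b n := by
    intro n hn
    obtain ⟨Q, hQ, hLQ⟩ := hdeg n
    obtain ⟨R, hR, hLR⟩ := hdeg (n - 1)
    have hRQ : R.degree < Q.degree := by rw [hQ, hR]; exact_mod_cast Nat.sub_lt hn one_pos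
    have hR0 : R ≠ 0 := fun h => by simp [h] at hR
    obtain ⟨hA, hB⟩ := eq_zero_of_forall_mul_eval_add_mul_eval_eq_zero hRQ hR0 hpos
      fun y hy => by
        obtain ⟨hy2, hwy⟩ := hsq y hy
        have := qDiff_coeff_combination_eq_zero hq hwy (hHκ n _) (hHqκ n _) (hHκ (n - 1) _)
          (hH n hn _) (hL n hn _)
        rwa [hy2, hLQ, hLR] at this
    exact ⟨by linear_combination hA, by linear_combination hB⟩
  refine ⟨fun n => ?_, fun n hn => (hcoeffs n hn).2⟩
  rcases Nat.eq_zero_or_pos n with rfl | hn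
  · obtain ⟨Q, hQ, hLQ⟩ := hdeg 0
    have hQ0 : Q ≠ 0 := fun h => by simp [h] at hQ
    have hA := eq_zero_of_forall_mul_eval_eq_zero hQ0 hpos fun y hy => by
      obtain ⟨hy2, hwy⟩ := hsq y hy
      -- a one-term expansion is a two-term one with zero second term
      have := qDiff_coeff_combination_eq_zero (f' := fun _ => 0) (g' := fun _ => 0) (B := 0)
        (b := 0) hq hwy (hHκ 0 _) (hHqκ 0 _) (by simp) (by simpa using hH0 _)
        (by simpa using hL0 _)
      rw [hy2, hLQ] at this
      simpa using this
    linear_combination hA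
  · exact (hcoeffs n hn).1

theorem fourier_coefficients_quadratic_relations_general
    (q κ : ℝ) (hq0 : 0 < q)
    (p pt P : ℕ → ℝ → ℝ → ℝ)
    (xid xio xtd xto Xid Xio : ℕ → ℝ)
    (hdegp : ∀ n : ℕ,
      ∃ Q : Polynomial ℝ, Q.degree = n ∧ ∀ y : ℝ, p n y (κ ^ 2) = Q.eval y)
    (hdegpt : ∀ n : ℕ,
      ∃ Q : Polynomial ℝ, Q.degree = n ∧ ∀ y : ℝ, pt n y (κ ^ 2) = Q.eval y)
    (hPeven : ∀ κ' ∈ ({κ, q * κ} : Set ℝ), ∀ (n : ℕ) (x : ℝ),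
      P (2 * n) x κ' = Real.sqrt ((1 + q) / 2) * p n (x ^ 2) (κ' ^ 2))
    (hPodd : ∀ κ' ∈ ({κ, q * κ} : Set ℝ), ∀ (n : ℕ) (x : ℝ),
      P (2 * n + 1) x κ' = Real.sqrt ((1 + q) / 2) * x * pt n (x ^ 2) (κ' ^ 2))
    (hxi0 : ∀ y : ℝ,
      (p 0 y (κ ^ 2) - p 0 y (q ^ 2 * κ ^ 2)) / ((1 - q ^ 2) * κ ^ 2)
        = xid 0 * p 0 y (κ ^ 2))
    (hxi : ∀ n : ℕ, 1 ≤ n → ∀ y : ℝ,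
      (p n y (κ ^ 2) - p n y (q ^ 2 * κ ^ 2)) / ((1 - q ^ 2) * κ ^ 2)
        = xid n * p n y (κ ^ 2) + xio n * p (n - 1) y (κ ^ 2))
    (hxt0 : ∀ y : ℝ,
      (pt 0 y (κ ^ 2) - pt 0 y (q ^ 2 * κ ^ 2)) / ((1 - q ^ 2) * κ ^ 2)
        = xtd 0 * pt 0 y (κ ^ 2))
    (hxt : ∀ n : ℕ, 1 ≤ n → ∀ y : ℝ,
      (pt n y (κ ^ 2) - pt n y (q ^ 2 * κ ^ 2)) / ((1 - q ^ 2) * κ ^ 2)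
        = xtd n * pt n y (κ ^ 2) + xto n * pt (n - 1) y (κ ^ 2))
    (hXi0 : ∀ x : ℝ,
      (P 0 x κ - P 0 x (q * κ)) / ((1 - q) * κ) = Xid 0 * P 0 x κ)
    (hXi1 : ∀ x : ℝ,
      (P 1 x κ - P 1 x (q * κ)) / ((1 - q) * κ) = Xid 1 * P 1 x κ)
    (hXi : ∀ n : ℕ, 2 ≤ n → ∀ x : ℝ,
      (P n x κ - P n x (q * κ)) / ((1 - q) * κ)
        = Xid n * P n x κ + Xio n * P (n - 2) x κ) :
    (∀ n : ℕ, Xid (2 * n) = (1 + q) * κ * xid n) ∧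
    (∀ n : ℕ, Xid (2 * n + 1) = (1 + q) * κ * xtd n) ∧
    (∀ n : ℕ, 1 ≤ n → Xio (2 * n) = (1 + q) * κ * xio n) ∧
    (∀ n : ℕ, 1 ≤ n → Xio (2 * n + 1) = (1 + q) * κ * xto n) := by
  have hq : 1 + q ≠ 0 := by positivity
  have hc : Real.sqrt ((1 + q) / 2) ≠ 0 := (Real.sqrt_pos.mpr (by positivity)).ne'
  have hκ : κ ∈ ({κ, q * κ} : Set ℝ) := by simp
  have hqκ : q * κ ∈ ({κ, q * κ} : Set ℝ) := by simp
  obtain ⟨hEd, hEo⟩ := qDiff_coeffs_eq_of_eq_mul_comp_sq hq p (fun n => P (2 * n)) _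
    (fun _ _ => hc) hdegp (hPeven κ hκ) (hPeven (q * κ) hqκ) xid xio (fun n => Xid (2 * n))
    (fun n => Xio (2 * n)) hxi0 hxi hXi0 fun n hn x => by
      rw [show 2 * (n - 1) = 2 * n - 2 by omega]
      exact hXi (2 * n) (by omega) x
  obtain ⟨hOd, hOo⟩ := qDiff_coeffs_eq_of_eq_mul_comp_sq hq pt (fun n => P (2 * n + 1))
    (fun x => Real.sqrt ((1 + q) / 2) * x) (fun _ hx => mul_ne_zero hc hx.ne') hdegpt
    (hPodd κ hκ) (hPodd (q * κ) hqκ) xtd xto (fun n => Xid (2 * n + 1)) (fun n => Xio (2 * n + 1))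
    hxt0 hxt hXi1 fun n hn x => by
      rw [show 2 * (n - 1) + 1 = 2 * n + 1 - 2 by omega]
      exact hXi (2 * n + 1) (by omega) x
  exact ⟨hEd, hOd, hEo, hOo⟩

/-- Theorem 3.6: quadratic relations between the Fourier coefficients of the
κ-deformed q-Laguerre and q-Hermite polynomial systems.  Here `p n y κ²` and
`pt n y κ²` are the little q-Laguerre polynomials (in base q², parameters α
and α+1), of degree exactly n in y, `P n x κ'` the generalized q-Hermite
polynomials, `xid n = ξ_{nn}`, `xio n = ξ_{n−1,n}` (resp. `xtd`, `xto` for the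
tilde family) the Fourier coefficients of `D_{q²}^{κ²} pₙ` (resp. `D_{q²}^{κ²} p̃ₙ`),
and `Xid n = Ξ_{nn}`, `Xio n = Ξ_{n−2,n}` those of `D_q^κ Pₙ`. -/
theorem fourier_coefficients_quadratic_relations
    (q κ : ℝ) (hq0 : 0 < q) (hq1 : q < 1) (hκ : κ ≠ 0)
    (p pt P : ℕ → ℝ → ℝ → ℝ)
    (xid xio xtd xto Xid Xio : ℕ → ℝ)
    (hdegp : ∀ n : ℕ,
      ∃ Q : Polynomial ℝ, Q.degree = n ∧ ∀ y : ℝ, p n y (κ ^ 2) = Q.eval y)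
    (hdegpt : ∀ n : ℕ,
      ∃ Q : Polynomial ℝ, Q.degree = n ∧ ∀ y : ℝ, pt n y (κ ^ 2) = Q.eval y)
    (hPeven : ∀ κ' ∈ ({κ, q * κ} : Set ℝ), ∀ (n : ℕ) (x : ℝ),
      P (2 * n) x κ' = Real.sqrt ((1 + q) / 2) * p n (x ^ 2) (κ' ^ 2))
    (hPodd : ∀ κ' ∈ ({κ, q * κ} : Set ℝ), ∀ (n : ℕ) (x : ℝ),
      P (2 * n + 1) x κ' = Real.sqrt ((1 + q) / 2) * x * pt n (x ^ 2) (κ' ^ 2))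
    (hxi0 : ∀ y : ℝ,
      (p 0 y (κ ^ 2) - p 0 y (q ^ 2 * κ ^ 2)) / ((1 - q ^ 2) * κ ^ 2)
        = xid 0 * p 0 y (κ ^ 2))
    (hxi : ∀ n : ℕ, 1 ≤ n → ∀ y : ℝ,
      (p n y (κ ^ 2) - p n y (q ^ 2 * κ ^ 2)) / ((1 - q ^ 2) * κ ^ 2)
        = xid n * p n y (κ ^ 2) + xio n * p (n - 1) y (κ ^ 2))
    (hxt0 : ∀ y : ℝ,
      (pt 0 y (κ ^ 2) - pt 0 y (q ^ 2 * κ ^ 2)) / ((1 - q ^ 2) * κ ^ 2)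
        = xtd 0 * pt 0 y (κ ^ 2))
    (hxt : ∀ n : ℕ, 1 ≤ n → ∀ y : ℝ,
      (pt n y (κ ^ 2) - pt n y (q ^ 2 * κ ^ 2)) / ((1 - q ^ 2) * κ ^ 2)
        = xtd n * pt n y (κ ^ 2) + xto n * pt (n - 1) y (κ ^ 2))
    (hXi0 : ∀ x : ℝ,
      (P 0 x κ - P 0 x (q * κ)) / ((1 - q) * κ) = Xid 0 * P 0 x κ)
    (hXi1 : ∀ x : ℝ,
      (P 1 x κ - P 1 x (q * κ)) / ((1 - q) * κ) = Xid 1 * P 1 x κ)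
    (hXi : ∀ n : ℕ, 2 ≤ n → ∀ x : ℝ,
      (P n x κ - P n x (q * κ)) / ((1 - q) * κ)
        = Xid n * P n x κ + Xio n * P (n - 2) x κ) :
    (∀ n : ℕ, Xid (2 * n) = (1 + q) * κ * xid n) ∧
    (∀ n : ℕ, Xid (2 * n + 1) = (1 + q) * κ * xtd n) ∧
    (∀ n : ℕ, 1 ≤ n → Xio (2 * n) = (1 + q) * κ * xio n) ∧
    (∀ n : ℕ, 1 ≤ n → Xio (2 * n + 1) = (1 + q) * κ * xto n) :=
  fourier_coefficients_quadratic_relations_general q κ hq0 p pt P xid xio xtd xto Xid Xio hdegp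
    hdegpt hPeven hPodd hxi0 hxi hxt0 hxt hXi0 hXi1 hXi
end
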